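/- arXiv:2107.03975 — 4 statements merged into one kernel-verified Lean document; each statement's English description precedes it below -/
import Mathlib

section
/- Let X = (X_n)_{n≥1} be a process with distribution μ on ℝ^ℕ that has a strong ℓp-characterization with constant limiting function f_{p,μ}. Suppose d₀ = f_{p,μ}(r₀) for some r₀ ∈ (0,1] and d₀ > 0. Then r₀ > 0 and r₀ is the unique r ∈ (0,1] with f_{p,μ}(r) = d₀; moreover, for every r ∈ (0,1) and every sequence of nonnegative integers (k_n) with k_n/n → r, lim_{n→∞} μ_n(A^{n,k_n}_{d₀}) = 1 if r > r₀, and lim_{n→∞} μ_n(A^{n,k_n}_{d₀}) = 0 if r < r₀. -/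
open MeasureTheory Filter Set
open scoped ENNReal Topology Classical

noncomputable section

/-- Left shift on real sequences. -/
def shift : (ℕ → ℝ) → (ℕ → ℝ) := fun x n => x (n + 1)

/-- First `n` coordinates of a sequence. -/
def proj (n : ℕ) (x : ℕ → ℝ) : Fin n → ℝ := fun i => x i

/-- Best `k`-term `ℓp`-approximation error of `x ∈ ℝ^n`. -/
def sigmaP (p : ℝ) (n k : ℕ) (x : Fin n → ℝ) : ℝ :=
  sInf {e : ℝ | ∃ S : Finset (Fin n), S.card = k ∧ e = (∑ i ∈ Sᶜ, |x i| ^ p) ^ (1 / p)}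

/-- Relative best `k`-term `ℓp`-approximation error. -/
def sigmaTilde (p : ℝ) (n k : ℕ) (x : Fin n → ℝ) : ℝ :=
  sigmaP p n k x / (∑ i, |x i| ^ p) ^ (1 / p)

/-- The set `A^{n,k}_d` of vectors with relative approximation error at most `d`. -/
def Ad (p : ℝ) (n k : ℕ) (d : ℝ) : Set (Fin n → ℝ) := {x | sigmaTilde p n k x ≤ d}

/-- `μ_n`: law of the first `n` coordinates. -/
def lawn (μ : Measure (ℕ → ℝ)) (n : ℕ) : Measure (Fin n → ℝ) := μ.map (proj n)

/-- Strong `ℓp`-characterization with constant limiting function `f : (0,1] → [0,1]`. -/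
def StrongLpChar (p : ℝ) (μ : Measure (ℕ → ℝ)) (f : ℝ → ℝ) : Prop :=
  (∀ r ∈ Set.Ioc (0:ℝ) 1, f r ∈ Set.Icc (0:ℝ) 1) ∧
  ∀ r ∈ Set.Ioc (0:ℝ) 1, ∀ k : ℕ → ℕ,
    Tendsto (fun n : ℕ => (k n : ℝ) / n) atTop (𝓝 r) →
    ∀ᵐ x ∂μ, Tendsto (fun n : ℕ => sigmaTilde p n (k n) (proj n x)) atTop (𝓝 (f r))

/-- `κ̃_p(d, ε, μ_n)`. -/
def kappaP (p : ℝ) (μ : Measure (ℕ → ℝ)) (d ε : ℝ) (n : ℕ) : ℕ :=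
  sInf {k : ℕ | 1 ≤ k ∧ k ≤ n ∧ 1 - ε ≤ (lawn μ n (Ad p n k d)).toReal}

/-- `r̃⁺_p(d, ε, μ)`. -/
def rTildePlus (p : ℝ) (μ : Measure (ℕ → ℝ)) (d ε : ℝ) : ℝ :=
  Filter.limsup (fun n : ℕ => (kappaP p μ d ε n : ℝ) / n) atTop

/-- `r̃⁻_p(d, ε, μ)`. -/
def rTildeMinus (p : ℝ) (μ : Measure (ℕ → ℝ)) (d ε : ℝ) : ℝ :=
  Filter.liminf (fun n : ℕ => (kappaP p μ d ε n : ℝ) / n) atTop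

/-- `(r, d)` is `ℓp`-achievable with probability `ε`. -/
def Achievable (p : ℝ) (μ : Measure (ℕ → ℝ)) (d ε r : ℝ) : Prop :=
  ∃ k : ℕ → ℕ, Filter.limsup (fun n : ℕ => (k n : ℝ) / n) atTop ≤ r ∧
    1 - ε ≤ Filter.liminf (fun n : ℕ => (lawn μ n (Ad p n (k n) d)).toReal) atTop

/-- `r_p(d, ε, μ)`: the rate-approximation error function. -/
def rOp (p : ℝ) (μ : Measure (ℕ → ℝ)) (d ε : ℝ) : ℝ :=
  sInf {r : ℝ | r ∈ Set.Icc (0:ℝ) 1 ∧ Achievable p μ d ε r}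

/-- `μ` is AMS with stationary mean `ν`. -/
def HasStationaryMean (μ ν : Measure (ℕ → ℝ)) : Prop :=
  ∀ F : Set (ℕ → ℝ), MeasurableSet F →
    Tendsto (fun n : ℕ => (∑ i ∈ Finset.range n, (μ (shift^[i] ⁻¹' F)).toReal) / n)
      atTop (𝓝 (ν F).toReal)

/-- `μ` is asymptotically mean stationary. -/
def IsAMS (μ : Measure (ℕ → ℝ)) : Prop :=
  ∀ F : Set (ℕ → ℝ), MeasurableSet F →
    ∃ L : ℝ, Tendsto (fun n : ℕ => (∑ i ∈ Finset.range n, (μ (shift^[i] ⁻¹' F)).toReal) / n)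
      atTop (𝓝 L)

/-- `ν` is stationary with respect to the shift. -/
def IsStationaryShift (ν : Measure (ℕ → ℝ)) : Prop :=
  ∀ F : Set (ℕ → ℝ), MeasurableSet F → ν (shift ⁻¹' F) = ν F

/-- `μ` is ergodic with respect to the shift. -/
def IsErgodicShift (μ : Measure (ℕ → ℝ)) : Prop :=
  ∀ F : Set (ℕ → ℝ), MeasurableSet F → shift ⁻¹' F = F → μ F = 0 ∨ μ F = 1

/-- 1D marginal: the law of the first coordinate. -/
def marginal1 (ν : Measure (ℕ → ℝ)) : Measure ℝ := ν.map (fun x => x 0)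

/-- The `p`-th absolute moment `∫ |x|^p dν` (as an extended real). -/
def momentP (p : ℝ) (ν : Measure ℝ) : ℝ≥0∞ := ∫⁻ x, ENNReal.ofReal (|x| ^ p) ∂ν

/-- Tail set `B_τ = (−∞,−τ] ∪ [τ,∞)`. -/
def Btau (τ : ℝ) : Set ℝ := Set.Iic (-τ) ∪ Set.Ici τ

/-- Tail set `C_τ = (−∞,−τ) ∪ (τ,∞)`. -/
def Ctau (τ : ℝ) : Set ℝ := Set.Iio (-τ) ∪ Set.Ioi τ

/-- Tail distribution function `φ_ν(τ) = ν(B_τ)`. -/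
def phiTail (ν : Measure ℝ) (τ : ℝ) : ℝ := (ν (Btau τ)).toReal

/-- `v_p(B) = (∫_B |x|^p dν) / (∫_ℝ |x|^p dν)`. -/
def vP (p : ℝ) (ν : Measure ℝ) (B : Set ℝ) : ℝ :=
  ((∫⁻ x in B, ENNReal.ofReal (|x| ^ p) ∂ν) / momentP p ν).toReal

/-- The rate vs approximation error graph `F_ν`. -/
def Fgraph (p : ℝ) (ν : Measure ℝ) : Set (ℝ × ℝ) :=
  {q | ∃ τ : ℝ, 0 ≤ τ ∧ q = (phiTail ν τ, (1 - vP p ν (Btau τ)) ^ (1 / p))} ∪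
  {q | ∃ τ : ℝ, 0 ≤ τ ∧ 0 < (ν ({-τ, τ} : Set ℝ)).toReal ∧
       ∃ α ∈ Set.Ico (0:ℝ) 1,
         q = ((ν (Ctau τ)).toReal + α * (ν ({-τ, τ} : Set ℝ)).toReal,
              (1 - vP p ν (Ctau τ) - α * vP p ν ({-τ, τ} : Set ℝ)) ^ (1 / p))}

/-- Approximation error function `f_{p,ν} : (0,1] → [0,1)`, defined through its graph `F_ν`,
with the convention `f_{p,ν} ≡ 0` when the `p`-th moment of `ν` is infinite. -/
def fApprox (p : ℝ) (ν : Measure ℝ) (r : ℝ) : ℝ :=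
  if momentP p ν = ∞ then 0 else sSup {d : ℝ | (r, d) ∈ Fgraph p ν}

/-!
`σ̃_p(k, x)^p` is the sum of the `n - k` smallest values `|x_i|^p` divided by their total, and the
mean of the `j` smallest terms of a nonnegative family is nondecreasing in `j`. Hence
`(n - k₁) σ̃_p(k₂, x)^p ≤ (n - k₂) σ̃_p(k₁, x)^p` for `k₁ ≤ k₂`, and along `kᵢ(n) = ⌊rᵢ n⌋` this
passes to the almost sure limits: `(1 - r₁) f(r₂)^p ≤ (1 - r₂) f(r₁)^p` for `r₁ ≤ r₂`. So `f` is
strictly decreasing wherever it is positive, which makes `r₀` unique and puts `f(r)` strictly below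
`d₀` for `r > r₀` and strictly above it for `r < r₀`. Almost sure convergence of
`σ̃_p(k_n, X^n)` to `f(r)` then drives `μ_n(A^{n,k_n}_{d₀})` to `1`, resp. `0`.
-/

section MinSubsetSum

variable {ι : Type*} {g : ι → ℝ} {j j' : ℕ}

def minSubsetSum (g : ι → ℝ) (j : ℕ) : ℝ :=
  ⨅ C : {C : Finset ι // C.card = j}, ∑ i ∈ C.1, g i

lemma minSubsetSum_le [Finite ι] {C : Finset ι} (hC : C.card = j) :
    minSubsetSum g j ≤ ∑ i ∈ C, g i :=
  ciInf_le (Set.finite_range _).bddBelow (⟨C, hC⟩ : {C : Finset ι // C.card = j})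

lemma exists_minSubsetSum_eq [Fintype ι] (hj : j ≤ Fintype.card ι) :
    ∃ C : Finset ι, C.card = j ∧ minSubsetSum g j = ∑ i ∈ C, g i := by
  obtain ⟨C, -, hC⟩ := Finset.exists_subset_card_eq (s := Finset.univ) (by simpa using hj)
  have : Nonempty {C : Finset ι // C.card = j} := ⟨⟨C, hC⟩⟩
  obtain ⟨⟨C, hC⟩, hmin⟩ :=
    exists_eq_ciInf_of_finite (f := fun C : {C : Finset ι // C.card = j} => ∑ i ∈ C.1, g i)
  exact ⟨C, hC, hmin.symm⟩

lemma minSubsetSum_nonneg (hg : 0 ≤ g) : 0 ≤ minSubsetSum g j :=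
  Real.iInf_nonneg fun _ => Finset.sum_nonneg fun i _ => hg i

lemma minSubsetSum_zero [Finite ι] (hg : 0 ≤ g) : minSubsetSum g 0 = 0 :=
  le_antisymm (by simpa using minSubsetSum_le (g := g) Finset.card_empty) (minSubsetSum_nonneg hg)

/-- Deleting each element of a minimal `(j+1)`-set in turn yields `j+1` sets of size `j` whose
sums add up to `j` times the minimal `(j+1)`-sum. -/
lemma succ_mul_minSubsetSum_le [Fintype ι] (hj : j + 1 ≤ Fintype.card ι) :
    (j + 1 : ℝ) * minSubsetSum g j ≤ j * minSubsetSum g (j + 1) := by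
  obtain ⟨C, hC, hmin⟩ := exists_minSubsetSum_eq (g := g) hj
  have herase : ∀ i ∈ C, minSubsetSum g j ≤ ∑ x ∈ C, g x - g i := fun i hi => by
    rw [← Finset.sum_erase_eq_sub hi]
    exact minSubsetSum_le (by rw [Finset.card_erase_of_mem hi, hC]; rfl)
  calc (j + 1 : ℝ) * minSubsetSum g j = ∑ i ∈ C, minSubsetSum g j := by simp [hC]
    _ ≤ ∑ i ∈ C, (∑ x ∈ C, g x - g i) := Finset.sum_le_sum herase
    _ = j * minSubsetSum g (j + 1) := by
      rw [Finset.sum_sub_distrib, Finset.sum_const, hC, hmin, nsmul_eq_mul]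
      push_cast
      ring

lemma mul_minSubsetSum_le_mul [Fintype ι] (hg : 0 ≤ g) (h : j ≤ j')
    (hj' : j' ≤ Fintype.card ι) :
    j' * minSubsetSum g j ≤ j * minSubsetSum g j' := by
  rcases Nat.eq_zero_or_pos j with rfl | hj
  · simp [minSubsetSum_zero hg]
  have hj'pos : (0 : ℝ) < j' := by exact_mod_cast hj.trans_le h
  suffices minSubsetSum g j / j ≤ minSubsetSum g j' / j' by
    rw [div_le_div_iff₀ (by positivity) hj'pos] at this
    linarith
  induction j', h using Nat.le_induction with
  | base => rfl
  | succ m hm ih =>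
    have hmpos : (0 : ℝ) < m := by exact_mod_cast hj.trans_le hm
    refine (ih (by omega) hmpos).trans ?_
    rw [div_le_div_iff₀ hmpos (by positivity), mul_comm]
    push_cast
    linarith [succ_mul_minSubsetSum_le (g := g) hj']

end MinSubsetSum

lemma sigmaP_eq_iInf (p : ℝ) (n k : ℕ) (x : Fin n → ℝ) :
    sigmaP p n k x =
      ⨅ S : {S : Finset (Fin n) // S.card = k}, (∑ i ∈ S.1ᶜ, |x i| ^ p) ^ (1 / p) := by
  rw [sigmaP, iInf]
  congr 1
  ext e
  simp [eq_comm]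

lemma measurable_sigmaTilde (p : ℝ) (n k : ℕ) : Measurable (sigmaTilde p n k) := by
  unfold sigmaTilde
  simp_rw [sigmaP_eq_iInf]
  refine Measurable.div (Measurable.iInf fun _ => ?_) ?_ <;> fun_prop

lemma sigmaP_eq_minSubsetSum_rpow {p : ℝ} (hp : 0 < p) {n k : ℕ} (hk : k ≤ n)
    (x : Fin n → ℝ) : sigmaP p n k x = minSubsetSum (fun i => |x i| ^ p) (n - k) ^ (1 / p) := by
  have hg : 0 ≤ fun i => |x i| ^ p := fun i => by positivity
  obtain ⟨C, hC, hmin⟩ := exists_minSubsetSum_eq (g := fun i => |x i| ^ p)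
    (show n - k ≤ Fintype.card (Fin n) by simp)
  have hCc : Cᶜ.card = k := by rw [Finset.card_compl, hC, Fintype.card_fin]; omega
  have : Nonempty {S : Finset (Fin n) // S.card = k} := ⟨⟨Cᶜ, hCc⟩⟩
  rw [sigmaP_eq_iInf]
  refine le_antisymm ?_ (le_ciInf fun S => ?_)
  · refine (ciInf_le (Set.finite_range _).bddBelow ⟨Cᶜ, hCc⟩).trans_eq ?_
    rw [compl_compl, hmin]
  · refine Real.rpow_le_rpow (minSubsetSum_nonneg hg) (minSubsetSum_le ?_) (by positivity)
    rw [Finset.card_compl, S.2, Fintype.card_fin]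

lemma sigmaTilde_rpow {p : ℝ} (hp : 0 < p) {n k : ℕ} (hk : k ≤ n) (x : Fin n → ℝ) :
    sigmaTilde p n k x ^ p = minSubsetSum (fun i => |x i| ^ p) (n - k) / ∑ i, |x i| ^ p := by
  have hm : 0 ≤ minSubsetSum (fun i => |x i| ^ p) (n - k) :=
    minSubsetSum_nonneg fun i => by positivity
  have hT : 0 ≤ ∑ i, |x i| ^ p := by positivity
  rw [sigmaTilde, sigmaP_eq_minSubsetSum_rpow hp hk, ← Real.div_rpow hm hT,
    ← Real.rpow_mul (div_nonneg hm hT), one_div_mul_cancel hp.ne', Real.rpow_one]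

lemma sub_mul_sigmaTilde_rpow_le {p : ℝ} (hp : 0 < p) {n k₁ k₂ : ℕ} (h : k₁ ≤ k₂)
    (hk₂ : k₂ ≤ n) (x : Fin n → ℝ) :
    ((n : ℝ) - k₁) * sigmaTilde p n k₂ x ^ p ≤ ((n : ℝ) - k₂) * sigmaTilde p n k₁ x ^ p := by
  rw [sigmaTilde_rpow hp hk₂, sigmaTilde_rpow hp (h.trans hk₂), mul_div_assoc', mul_div_assoc']
  refine div_le_div_of_nonneg_right ?_ (by positivity)
  have := mul_minSubsetSum_le_mul (g := fun i => |x i| ^ p) (fun i => by positivity)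
    (Nat.sub_le_sub_left h n) (by simp)
  rwa [Nat.cast_sub hk₂, Nat.cast_sub (h.trans hk₂)] at this

section ConvergenceOfLevelSets

variable {Ω : Type*} [MeasurableSpace Ω] {μ : Measure Ω} [IsFiniteMeasure μ] {Y : ℕ → Ω → ℝ}
  {c d : ℝ}

lemma tendsto_measure_setOf_le_of_lt (hY : ∀ n, Measurable (Y n))
    (hlim : ∀ᵐ ω ∂μ, Tendsto (fun n => Y n ω) atTop (𝓝 c)) (hcd : c < d) :
    Tendsto (fun n => μ {ω | Y n ω ≤ d}) atTop (𝓝 (μ univ)) := by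
  refine tendsto_measure_of_ae_tendsto_indicator_of_isFiniteMeasure atTop MeasurableSet.univ
    (fun n => measurableSet_le (hY n) measurable_const) ?_
  filter_upwards [hlim] with ω hω
  filter_upwards [hω.eventually (gt_mem_nhds hcd)] with n hn
  simpa using hn.le

lemma tendsto_measure_setOf_le_of_gt (hY : ∀ n, Measurable (Y n))
    (hlim : ∀ᵐ ω ∂μ, Tendsto (fun n => Y n ω) atTop (𝓝 c)) (hdc : d < c) :
    Tendsto (fun n => μ {ω | Y n ω ≤ d}) atTop (𝓝 0) := by
  rw [← measure_empty (μ := μ)]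
  refine tendsto_measure_of_ae_tendsto_indicator_of_isFiniteMeasure atTop MeasurableSet.empty
    (fun n => measurableSet_le (hY n) measurable_const) ?_
  filter_upwards [hlim] with ω hω
  filter_upwards [hω.eventually (lt_mem_nhds hdc)] with n hn
  simpa using hn

end ConvergenceOfLevelSets

lemma measurable_proj (n : ℕ) : Measurable (proj n) :=
  measurable_pi_lambda _ fun _ => measurable_pi_apply _

lemma lawn_Ad (μ : Measure (ℕ → ℝ)) (p : ℝ) (n k : ℕ) (d : ℝ) :
    lawn μ n (Ad p n k d) = μ {x | sigmaTilde p n k (proj n x) ≤ d} :=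
  Measure.map_apply (measurable_proj n) (measurableSet_le (measurable_sigmaTilde p n k)
    measurable_const)

lemma tendsto_nat_floor_mul_natCast_div {r : ℝ} (hr : 0 ≤ r) :
    Tendsto (fun n : ℕ => (⌊r * n⌋₊ : ℝ) / n) atTop (𝓝 r) :=
  (tendsto_nat_floor_mul_div_atTop hr).comp tendsto_natCast_atTop_atTop

namespace StrongLpChar

variable {p : ℝ} {μ : Measure (ℕ → ℝ)} [IsProbabilityMeasure μ] {f : ℝ → ℝ}

lemma tendsto_lawn_Ad_one (hchar : StrongLpChar p μ f) {r d : ℝ} (hr : r ∈ Ioc 0 1)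
    {k : ℕ → ℕ} (hk : Tendsto (fun n : ℕ => (k n : ℝ) / n) atTop (𝓝 r)) (hd : f r < d) :
    Tendsto (fun n => (lawn μ n (Ad p n (k n) d)).toReal) atTop (𝓝 1) := by
  have := tendsto_measure_setOf_le_of_lt (fun n => (measurable_sigmaTilde p n (k n)).comp
    (measurable_proj n)) (hchar.2 r hr k hk) hd
  rw [measure_univ] at this
  simp only [lawn_Ad]
  exact (ENNReal.tendsto_toReal ENNReal.one_ne_top).comp this

lemma tendsto_lawn_Ad_zero (hchar : StrongLpChar p μ f) {r d : ℝ} (hr : r ∈ Ioc 0 1)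
    {k : ℕ → ℕ} (hk : Tendsto (fun n : ℕ => (k n : ℝ) / n) atTop (𝓝 r)) (hd : d < f r) :
    Tendsto (fun n => (lawn μ n (Ad p n (k n) d)).toReal) atTop (𝓝 0) := by
  have := tendsto_measure_setOf_le_of_gt (fun n => (measurable_sigmaTilde p n (k n)).comp
    (measurable_proj n)) (hchar.2 r hr k hk) hd
  simp only [lawn_Ad]
  exact (ENNReal.tendsto_toReal ENNReal.zero_ne_top).comp this

lemma one_sub_mul_rpow_le (hp : 0 < p) (hchar : StrongLpChar p μ f) {r₁ r₂ : ℝ}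
    (h₁ : r₁ ∈ Ioc 0 1) (h₂ : r₂ ∈ Ioc 0 1) (h : r₁ ≤ r₂) :
    (1 - r₁) * f r₂ ^ p ≤ (1 - r₂) * f r₁ ^ p := by
  set k₁ : ℕ → ℕ := fun n => ⌊r₁ * n⌋₊
  set k₂ : ℕ → ℕ := fun n => ⌊r₂ * n⌋₊
  have hk₁ : Tendsto (fun n : ℕ => (k₁ n : ℝ) / n) atTop (𝓝 r₁) :=
    tendsto_nat_floor_mul_natCast_div h₁.1.le
  have hk₂ : Tendsto (fun n : ℕ => (k₂ n : ℝ) / n) atTop (𝓝 r₂) :=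
    tendsto_nat_floor_mul_natCast_div h₂.1.le
  have : (ae μ).NeBot := ae_neBot.2 (IsProbabilityMeasure.ne_zero μ)
  obtain ⟨x, hx₁, hx₂⟩ := ((hchar.2 r₁ h₁ k₁ hk₁).and (hchar.2 r₂ h₂ k₂ hk₂)).exists
  have hrpow : Continuous fun y : ℝ => y ^ p := Real.continuous_rpow_const hp.le
  refine le_of_tendsto_of_tendsto
    ((tendsto_const_nhds.sub hk₁).mul ((hrpow.tendsto _).comp hx₂))
    ((tendsto_const_nhds.sub hk₂).mul ((hrpow.tendsto _).comp hx₁)) ?_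
  filter_upwards [eventually_gt_atTop 0] with n hn
  have hk : k₁ n ≤ k₂ n := Nat.floor_le_floor (by gcongr)
  have hk₂n : k₂ n ≤ n := Nat.floor_le_of_le (mul_le_of_le_one_left n.cast_nonneg h₂.2)
  have hnR : (0 : ℝ) < n := by exact_mod_cast hn
  simp only [Function.comp, one_sub_div hnR.ne', div_mul_eq_mul_div]
  exact div_le_div_of_nonneg_right (sub_mul_sigmaTilde_rpow_le hp hk hk₂n _) hnR.le

lemma lt_of_lt_of_pos (hp : 0 < p) (hchar : StrongLpChar p μ f) {r₁ r₂ : ℝ}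
    (h₁ : r₁ ∈ Ioc 0 1) (h₂ : r₂ ∈ Ioc 0 1) (h : r₁ < r₂) (hpos : 0 < f r₂) : f r₂ < f r₁ := by
  by_contra! hle
  have hf₁ : 0 ≤ f r₁ := (hchar.1 r₁ h₁).1
  have hpow : f r₁ ^ p ≤ f r₂ ^ p := Real.rpow_le_rpow hf₁ hle hp.le
  have hpow_pos : 0 < f r₂ ^ p := Real.rpow_pos_of_pos hpos p
  have := hchar.one_sub_mul_rpow_le hp h₁ h₂ h.le
  nlinarith [h₂.2]

end StrongLpChar

/-- Lemma 1(i): phase transition for a process with a strong `ℓp`-characterization and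
constant limiting function, at a positive distortion level `d₀ = f(r₀)`. -/
theorem strong_char_phase_transition
    (p : ℝ) (hp : 0 < p) (μ : Measure (ℕ → ℝ)) [IsProbabilityMeasure μ]
    (f : ℝ → ℝ) (hchar : StrongLpChar p μ f)
    (r₀ d₀ : ℝ) (hr₀ : r₀ ∈ Set.Ioc (0:ℝ) 1) (hd₀ : d₀ = f r₀) (hd₀pos : 0 < d₀) :
    0 < r₀ ∧
    (∀ r ∈ Set.Ioc (0:ℝ) 1, f r = d₀ → r = r₀) ∧
    (∀ r ∈ Set.Ioo (0:ℝ) 1, ∀ k : ℕ → ℕ,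
      Tendsto (fun n : ℕ => (k n : ℝ) / n) atTop (𝓝 r) →
      (r₀ < r →
        Tendsto (fun n : ℕ => (lawn μ n (Ad p n (k n) d₀)).toReal) atTop (𝓝 1)) ∧
      (r < r₀ →
        Tendsto (fun n : ℕ => (lawn μ n (Ad p n (k n) d₀)).toReal) atTop (𝓝 0))) := by
  subst hd₀
  refine ⟨hr₀.1, fun r hr hfr => ?_, fun r hr k hk => ⟨fun hlt => ?_, fun hlt => ?_⟩⟩
  · rcases lt_trichotomy r r₀ with hlt | heq | hgt
    · exact absurd hfr (hchar.lt_of_lt_of_pos hp hr hr₀ hlt hd₀pos).ne'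
    · exact heq
    · exact absurd hfr (hchar.lt_of_lt_of_pos hp hr₀ hr hgt (hfr ▸ hd₀pos)).ne
  · have hr' : r ∈ Ioc 0 1 := Ioo_subset_Ioc_self hr
    refine hchar.tendsto_lawn_Ad_one hr' hk ?_
    rcases (hchar.1 r hr').1.eq_or_lt with hfr | hfr
    · rwa [← hfr]
    · exact hchar.lt_of_lt_of_pos hp hr₀ hr' hlt hfr
  · exact hchar.tendsto_lawn_Ad_zero (Ioo_subset_Ioc_self hr) hk
      (hchar.lt_of_lt_of_pos hp (Ioo_subset_Ioc_self hr) hr₀ hlt hd₀pos)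

end
end

section
/- Let X = (X_n)_{n≥1} be a process with distribution μ on ℝ^ℕ that has a strong ℓp-characterization with constant limiting function f_{p,μ}. If f_{p,μ}(r₀) = 0 for some r₀ ∈ (0,1], then for every ε ∈ (0,1) and every d ∈ (0,1), r_p(d,ε,μ) ≤ r̃⁺_p(d,ε,μ) ≤ r₀. -/
open MeasureTheory Filter Set
open scoped ENNReal Topology Classical

noncomputable section

lemma lawn_le_measure_univ (μ : Measure (ℕ → ℝ)) (n : ℕ) (s : Set (Fin n → ℝ)) :
    lawn μ n s ≤ μ univ :=
  calc lawn μ n s ≤ lawn μ n univ := measure_mono (subset_univ s)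
    _ = μ univ := by
      rw [lawn, Measure.map_apply (measurable_proj n) MeasurableSet.univ, preimage_univ]

lemma measurableSet_Ad (p : ℝ) (n k : ℕ) (d : ℝ) : MeasurableSet (Ad p n k d) :=
  measurableSet_le (measurable_sigmaTilde p n k) measurable_const

lemma tendsto_measureReal_setOf_le_of_tendsto_ae {Ω : Type*} [MeasurableSpace Ω]
    {μ : Measure Ω} [IsProbabilityMeasure μ] {g : ℕ → Ω → ℝ} (hg : ∀ n, Measurable (g n))
    (hlim : ∀ᵐ ω ∂μ, Tendsto (fun n => g n ω) atTop (𝓝 0)) {d : ℝ} (hd : 0 < d) :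
    Tendsto (fun n => μ.real {ω | g n ω ≤ d}) atTop (𝓝 1) := by
  have hfar : Tendsto (fun n => μ.real {ω | d ≤ dist (g n ω) 0}) atTop (𝓝 0) :=
    tendstoInMeasure_iff_measureReal_dist.mp
      (tendstoInMeasure_of_tendsto_ae (fun n => (hg n).aestronglyMeasurable) hlim) d hd
  have hgt : Tendsto (fun n => μ.real {ω | d < g n ω}) atTop (𝓝 0) := by
    refine squeeze_zero (fun n => measureReal_nonneg) (fun n => measureReal_mono ?_) hfar
    intro ω (hω : d < g n ω)
    simpa [Real.dist_eq] using hω.le.trans (le_abs_self _)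
  have hcompl : ∀ n, μ.real {ω | g n ω ≤ d} = 1 - μ.real {ω | d < g n ω} := fun n => by
    rw [← probReal_compl_eq_one_sub (measurableSet_lt measurable_const (hg n))]
    simp only [compl_ofPred, not_lt]
  simpa [hcompl] using hgt.const_sub 1

section Rates

variable {p : ℝ} {μ : Measure (ℕ → ℝ)} {d ε : ℝ}

lemma kappaP_le_self (n : ℕ) : kappaP p μ d ε n ≤ n := by
  rcases Set.eq_empty_or_nonempty
    {k : ℕ | 1 ≤ k ∧ k ≤ n ∧ 1 - ε ≤ (lawn μ n (Ad p n k d)).toReal} with h | h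
  · rw [kappaP, h, Nat.sInf_empty]
    exact n.zero_le
  · exact (Nat.sInf_mem h).2.1

lemma kappaP_le {n k : ℕ} (h1k : 1 ≤ k) (hkn : k ≤ n)
    (hk : 1 - ε ≤ (lawn μ n (Ad p n k d)).toReal) : kappaP p μ d ε n ≤ k :=
  Nat.sInf_le ⟨h1k, hkn, hk⟩

lemma one_sub_le_lawn_Ad_kappaP {n k : ℕ} (h1k : 1 ≤ k) (hkn : k ≤ n)
    (hk : 1 - ε ≤ (lawn μ n (Ad p n k d)).toReal) :
    1 - ε ≤ (lawn μ n (Ad p n (kappaP p μ d ε n) d)).toReal :=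
  (Nat.sInf_mem (s := {k : ℕ | 1 ≤ k ∧ k ≤ n ∧ 1 - ε ≤ (lawn μ n (Ad p n k d)).toReal})
    ⟨k, h1k, hkn, hk⟩).2.2

lemma kappaP_div_mem_Icc (n : ℕ) : (kappaP p μ d ε n : ℝ) / n ∈ Icc 0 1 := by
  refine ⟨by positivity, div_le_one_of_le₀ ?_ n.cast_nonneg⟩
  exact_mod_cast kappaP_le_self n

lemma isBoundedUnder_kappaP_div :
    IsBoundedUnder (· ≤ ·) atTop fun n => (kappaP p μ d ε n : ℝ) / n :=
  isBoundedUnder_of ⟨1, fun n => (kappaP_div_mem_Icc n).2⟩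

lemma isCoboundedUnder_kappaP_div :
    IsCoboundedUnder (· ≤ ·) atTop fun n => (kappaP p μ d ε n : ℝ) / n :=
  (isBoundedUnder_of ⟨0, fun n => (kappaP_div_mem_Icc n).1⟩).isCoboundedUnder_le

lemma rTildePlus_mem_Icc : rTildePlus p μ d ε ∈ Icc 0 1 :=
  ⟨le_limsup_of_frequently_le (.of_forall fun n => (kappaP_div_mem_Icc n).1)
      isBoundedUnder_kappaP_div,
    limsup_le_of_le isCoboundedUnder_kappaP_div (.of_forall fun n => (kappaP_div_mem_Icc n).2)⟩

lemma rTildePlus_le_of_tendsto {k : ℕ → ℕ} {r : ℝ}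
    (hk : Tendsto (fun n => (k n : ℝ) / n) atTop (𝓝 r))
    (hadm : ∀ᶠ n in atTop, 1 ≤ k n ∧ k n ≤ n ∧ 1 - ε ≤ (lawn μ n (Ad p n (k n) d)).toReal) :
    rTildePlus p μ d ε ≤ r := by
  have hle : (fun n => (kappaP p μ d ε n : ℝ) / n) ≤ᶠ[atTop] fun n => (k n : ℝ) / n := by
    filter_upwards [hadm] with n ⟨h1k, hkn, hk⟩
    gcongr
    exact_mod_cast kappaP_le h1k hkn hk
  exact (limsup_le_limsup hle isCoboundedUnder_kappaP_div hk.isBoundedUnder_le).trans_eq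
    hk.limsup_eq

lemma achievable_rTildePlus [IsFiniteMeasure μ]
    (hadm : ∀ᶠ n in atTop, ∃ k, 1 ≤ k ∧ k ≤ n ∧ 1 - ε ≤ (lawn μ n (Ad p n k d)).toReal) :
    Achievable p μ d ε (rTildePlus p μ d ε) := by
  refine ⟨kappaP p μ d ε, le_rfl, le_liminf_of_le ?_ ?_⟩
  · refine isBoundedUnder_of ⟨(μ univ).toReal, fun n => ?_⟩ |>.isCoboundedUnder_ge
    exact ENNReal.toReal_mono (measure_ne_top μ univ) (lawn_le_measure_univ μ n _)
  · filter_upwards [hadm] with n ⟨k, h1k, hkn, hk⟩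
    exact one_sub_le_lawn_Ad_kappaP h1k hkn hk

lemma rOp_le_of_achievable {r : ℝ} (hr : r ∈ Icc 0 1) (h : Achievable p μ d ε r) :
    rOp p μ d ε ≤ r :=
  csInf_le ⟨0, fun _ hr' => hr'.1.1⟩ ⟨hr, h⟩

end Rates

lemma tendsto_lawn_Ad_of_tendsto_ae {p d : ℝ} {μ : Measure (ℕ → ℝ)} [IsProbabilityMeasure μ]
    {k : ℕ → ℕ} (hd : 0 < d)
    (hlim : ∀ᵐ x ∂μ, Tendsto (fun n => sigmaTilde p n (k n) (proj n x)) atTop (𝓝 0)) :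
    Tendsto (fun n => (lawn μ n (Ad p n (k n) d)).toReal) atTop (𝓝 1) := by
  have hlaw : ∀ n, (lawn μ n (Ad p n (k n) d)).toReal
      = μ.real {x | sigmaTilde p n (k n) (proj n x) ≤ d} := fun n => by
    rw [lawn, Measure.map_apply (measurable_proj n) (measurableSet_Ad p n (k n) d)]
    rfl
  simp_rw [hlaw]
  exact tendsto_measureReal_setOf_le_of_tendsto_ae
    (fun n => (measurable_sigmaTilde p n (k n)).comp (measurable_proj n)) hlim hd

theorem weak_rate_le_of_zero_strong_char_general
    (p : ℝ) (μ : Measure (ℕ → ℝ)) [IsProbabilityMeasure μ]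
    (f : ℝ → ℝ) (hchar : StrongLpChar p μ f)
    (r₀ : ℝ) (hr₀ : r₀ ∈ Set.Ioc (0:ℝ) 1) (hf0 : f r₀ = 0) :
    ∀ ε ∈ Set.Ioo (0:ℝ) 1, ∀ d ∈ Set.Ioo (0:ℝ) 1,
      rOp p μ d ε ≤ rTildePlus p μ d ε ∧ rTildePlus p μ d ε ≤ r₀ := by
  intro ε hε d hd
  set k : ℕ → ℕ := fun n => ⌈r₀ * n⌉₊
  have hk : Tendsto (fun n => (k n : ℝ) / n) atTop (𝓝 r₀) :=
    (tendsto_nat_ceil_mul_div_atTop hr₀.1.le).comp tendsto_natCast_atTop_atTop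
  have hlaw : ∀ᶠ n in atTop, 1 - ε ≤ (lawn μ n (Ad p n (k n) d)).toReal :=
    (tendsto_lawn_Ad_of_tendsto_ae hd.1 (hf0 ▸ hchar.2 r₀ hr₀ k hk)).eventually_const_le
      (by linarith [hε.1])
  have hadm : ∀ᶠ n in atTop,
      1 ≤ k n ∧ k n ≤ n ∧ 1 - ε ≤ (lawn μ n (Ad p n (k n) d)).toReal := by
    filter_upwards [hlaw, eventually_gt_atTop 0] with n hn hpos
    have hn0 : (0 : ℝ) < n := Nat.cast_pos.mpr hpos
    exact ⟨Nat.one_le_ceil_iff.mpr (mul_pos hr₀.1 hn0),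
      Nat.ceil_le.mpr (mul_le_of_le_one_left hn0.le hr₀.2), hn⟩
  exact ⟨rOp_le_of_achievable rTildePlus_mem_Icc
      (achievable_rTildePlus (hadm.mono fun n h => ⟨k n, h⟩)),
    rTildePlus_le_of_tendsto hk hadm⟩

/-- Corollary 1 (second part): if `f_{p,μ}(r₀) = 0` for some `r₀ ∈ (0,1]`, then for all
`ε, d ∈ (0,1)` we have `r_p(d,ε,μ) ≤ r̃⁺_p(d,ε,μ) ≤ r₀`. -/
theorem weak_rate_le_of_zero_strong_char
    (p : ℝ) (hp : 0 < p) (μ : Measure (ℕ → ℝ)) [IsProbabilityMeasure μ]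
    (f : ℝ → ℝ) (hchar : StrongLpChar p μ f)
    (r₀ : ℝ) (hr₀ : r₀ ∈ Set.Ioc (0:ℝ) 1) (hf0 : f r₀ = 0) :
    ∀ ε ∈ Set.Ioo (0:ℝ) 1, ∀ d ∈ Set.Ioo (0:ℝ) 1,
      rOp p μ d ε ≤ rTildePlus p μ d ε ∧ rTildePlus p μ d ε ≤ r₀ :=
  weak_rate_le_of_zero_strong_char_general p μ f hchar r₀ hr₀ hf0

end
end

section
/- Let μ be an AMS and ergodic probability measure on ℝ^ℕ with stationary mean μ̄ and one-dimensional marginal μ̄₁, and let p > 0. If ∫_ℝ |x|^p dμ̄₁(x) = ∞, then for every r ∈ (0,1] and every sequence of nonnegative integers (k_n) with k_n/n → r, σ̃_p(k_n, X^n) → 0 μ-almost surely, where X^n = (X_1,…,X_n) denotes the first n coordinates. -/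
open MeasureTheory Filter Set
open scoped ENNReal Topology Classical

noncomputable section

/-! A stationary mean `ν` of an AMS measure `μ` is shift-invariant, and `μ` and `ν` agree on
shift-invariant sets, so `ν` inherits ergodicity from `μ` and every `ν`-almost sure
shift-invariant event is `μ`-almost sure. This transfers Birkhoff's ergodic theorem for bounded
observables of `ν` (obtained from a maximal-inequality argument) to `μ`.

Applied to `1{t < |x₀|}` it shows that the frequency of indices `i < n` with `t < |Xᵢ|` tends to
`ν₁{t < |s|}`, which is smaller than `r` once `t` is large; then eventually `kₙ` exceeds the
number of such indices, and the `ℓp`-mass left outside the `kₙ` largest entries is at most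
`n tᵖ`. Applied to the truncations `min (|x₀|ᵖ) M` it shows, since `∫ |s|ᵖ dν₁ = ∞`, that
`(1/n) ∑_{i<n} |Xᵢ|ᵖ → ∞`. Hence `σ̃ₚ(kₙ, Xⁿ)ᵖ ≤ n tᵖ / ∑_{i<n} |Xᵢ|ᵖ → 0`. -/

theorem limsup_eq_limsup_of_tendsto_sub {ι : Type*} {l : Filter ι} [l.NeBot] {u v : ι → ℝ}
    {C : ℝ} (hu : ∀ i, |u i| ≤ C) (hv : ∀ i, |v i| ≤ C) (h : Tendsto (u - v) l (𝓝 0)) :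
    limsup u l = limsup v l := by
  have key : ∀ {u v : ι → ℝ}, (∀ i, |v i| ≤ C) → Tendsto (u - v) l (𝓝 0) →
      limsup u l ≤ limsup v l := by
    intro u v hv h
    have hbdd : IsBoundedUnder (· ≤ ·) l v :=
      isBoundedUnder_of ⟨C, fun i => (abs_le.1 (hv i)).2⟩
    have hcobdd : IsCoboundedUnder (· ≤ ·) l v :=
      isCoboundedUnder_le_of_le l (x := -C) fun i => (abs_le.1 (hv i)).1
    calc limsup u l = limsup ((u - v) + v) l := by rw [sub_add_cancel]
      _ ≤ limsup (u - v) l + limsup v l :=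
        limsup_add_le h.isBoundedUnder_ge h.isBoundedUnder_le hcobdd hbdd
      _ = limsup v l := by rw [h.limsup_eq, zero_add]
  exact le_antisymm (key hv h) (key hu (by rw [← neg_sub, ← neg_zero]; exact h.neg))

theorem tendsto_sum_range_succ_div {a : ℕ → ℝ} {C l : ℝ} (ha : ∀ n, |a n| ≤ C)
    (h : Tendsto (fun n : ℕ => (∑ i ∈ Finset.range n, a i) / n) atTop (𝓝 l)) :
    Tendsto (fun n : ℕ => (∑ i ∈ Finset.range n, a (i + 1)) / n) atTop (𝓝 l) := by
  have hdiff : Tendsto (fun n : ℕ => (a n - a 0) / n) atTop (𝓝 0) := by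
    refine squeeze_zero_norm (fun n => ?_) (tendsto_const_div_atTop_nhds_zero_nat (2 * C))
    rw [Real.norm_eq_abs, abs_div, Nat.abs_cast]
    gcongr
    linarith [abs_sub (a n) (a 0), ha n, ha 0]
  rw [← add_zero l]
  refine (h.add hdiff).congr fun n => ?_
  rw [← add_div]
  congr 1
  linarith [Finset.sum_range_succ a n, Finset.sum_range_succ' a n]

theorem tendsto_integral_min_atTop_of_lintegral_eq_top {α : Type*} [MeasurableSpace α]
    {ρ : Measure α} [IsFiniteMeasure ρ] {g : α → ℝ} (hgm : Measurable g) (hg0 : ∀ x, 0 ≤ g x)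
    (htop : ∫⁻ x, ENNReal.ofReal (g x) ∂ρ = ∞) :
    Tendsto (fun M : ℕ => ∫ x, min (g x) M ∂ρ) atTop atTop := by
  have hlim : Tendsto (fun M : ℕ => ∫⁻ x, ENNReal.ofReal (min (g x) M) ∂ρ) atTop (𝓝 ∞) := by
    rw [← htop]
    refine lintegral_tendsto_of_tendsto_of_monotone
      (fun M => (hgm.min measurable_const).ennreal_ofReal.aemeasurable)
      (ae_of_all _ fun x M M' hMM' => ENNReal.ofReal_le_ofReal (min_le_min_left _ (by
        exact_mod_cast hMM'))) (ae_of_all _ fun x => ?_)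
    refine ENNReal.tendsto_ofReal (tendsto_const_nhds.congr' ?_)
    filter_upwards [eventually_ge_atTop ⌈g x⌉₊] with M hM
    exact (min_eq_left ((Nat.le_ceil _).trans (by exact_mod_cast hM))).symm
  refine tendsto_atTop.2 fun K => ?_
  filter_upwards [hlim.eventually_const_lt (ENNReal.ofReal_lt_top (r := K))] with M hM
  have hint : Integrable (fun x => min (g x) M) ρ :=
    .of_bound (hgm.min measurable_const).aestronglyMeasurable M (ae_of_all _ fun x => by
      rw [Real.norm_of_nonneg (le_min (hg0 x) M.cast_nonneg)]
      exact min_le_right _ _)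
  rw [integral_eq_lintegral_of_nonneg_ae (ae_of_all _ fun x => le_min (hg0 x) M.cast_nonneg)
    hint.aestronglyMeasurable]
  exact (ENNReal.ofReal_le_iff_le_toReal hint.lintegral_lt_top.ne).1 hM.le

theorem tendsto_measureReal_abs_gt_atTop (ρ : Measure ℝ) [IsFiniteMeasure ρ] :
    Tendsto (fun t : ℝ => ρ.real {s | t < |s|}) atTop (𝓝 0) := by
  have := tendsto_measure_norm_gt_of_isTightMeasureSet (isTightMeasureSet_singleton (μ := ρ))
  simp only [mem_singleton_iff, iSup_iSup_eq_left, Real.norm_eq_abs] at this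
  simpa [measureReal_def, Function.comp_def] using
    (ENNReal.tendsto_toReal ENNReal.zero_ne_top).comp this

section BirkhoffAverage

variable {α : Type*} {T : α → α} {f : α → ℝ} {C : ℝ}

theorem abs_birkhoffAverage_le (hfC : ∀ x, |f x| ≤ C) (n : ℕ) (x : α) :
    |birkhoffAverage ℝ T f n x| ≤ C := by
  have hC : 0 ≤ C := (abs_nonneg _).trans (hfC x)
  have hsum : |birkhoffSum T f n x| ≤ n * C :=
    (Finset.abs_sum_le_sum_abs _ _).trans <| by
      simpa using Finset.sum_le_sum fun i (_ : i ∈ Finset.range n) => hfC (T^[i] x)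
  rw [birkhoffAverage, smul_eq_mul, abs_mul, abs_inv, Nat.abs_cast]
  rcases n.eq_zero_or_pos with rfl | hn
  · simpa using hC
  · rw [inv_mul_le_iff₀ (by positivity)]
    exact hsum

theorem birkhoffAverage_const_add (c : ℝ) {n : ℕ} (hn : n ≠ 0) (x : α) :
    birkhoffAverage ℝ T (fun y => c + f y) n x = c + birkhoffAverage ℝ T f n x := by
  have hc : birkhoffAverage ℝ T (fun _ => c) n = fun _ => c :=
    birkhoffAverage_of_comp_eq ℝ rfl (Nat.cast_ne_zero.2 hn)
  rw [show (fun y => c + f y) = (fun _ => c) + f from rfl, birkhoffAverage_add, Pi.add_apply,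
    Pi.add_apply, hc]

theorem tendsto_birkhoffAverage_apply_sub (hfC : ∀ x, |f x| ≤ C) (x : α) :
    Tendsto (fun n => birkhoffAverage ℝ T f n (T x) - birkhoffAverage ℝ T f n x) atTop (𝓝 0) :=
  tendsto_birkhoffAverage_apply_sub_birkhoffAverage' ℝ
    (isBounded_iff_forall_norm_le.2 ⟨C, by rintro _ ⟨y, rfl⟩; exact hfC y⟩) T x

theorem limsup_birkhoffAverage_apply (hfC : ∀ x, |f x| ≤ C) (x : α) :
    limsup (fun n => birkhoffAverage ℝ T f n (T x)) atTop =
      limsup (fun n => birkhoffAverage ℝ T f n x) atTop :=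
  limsup_eq_limsup_of_tendsto_sub (abs_birkhoffAverage_le hfC · _)
    (abs_birkhoffAverage_le hfC · _) (tendsto_birkhoffAverage_apply_sub hfC x)

theorem tendsto_birkhoffAverage_apply_iff (hfC : ∀ x, |f x| ≤ C) (x : α) {c : ℝ} :
    Tendsto (fun n => birkhoffAverage ℝ T f n (T x)) atTop (𝓝 c) ↔
      Tendsto (fun n => birkhoffAverage ℝ T f n x) atTop (𝓝 c) := by
  have h := tendsto_birkhoffAverage_apply_sub (T := T) hfC x
  exact ⟨fun hT => by simpa using hT.sub h, fun h' => by simpa using h'.add h⟩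

theorem le_birkhoffSum_of_forall_exists {g : α → ℝ} (hg : ∀ x, 0 ≤ g x) {a : ℝ} (ha : 0 ≤ a)
    {N : ℕ} (h : ∀ x, ∃ n ∈ Finset.Icc 1 N, a * n ≤ birkhoffSum T g n x) (M : ℕ) (x : α) :
    a * M - a * N ≤ birkhoffSum T g M x := by
  induction M using Nat.strong_induction_on generalizing x with
  | _ M ih =>
  by_cases hM : M ≤ N
  · have : a * M ≤ a * N := by gcongr
    have : 0 ≤ birkhoffSum T g M x := Finset.sum_nonneg fun i _ => hg _
    linarith
  · obtain ⟨t, ht, hat⟩ := h x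
    rw [Finset.mem_Icc] at ht
    obtain ⟨m, rfl⟩ : ∃ m, M = t + m := ⟨M - t, by omega⟩
    have := ih m (by omega) (T^[t] x)
    rw [birkhoffSum_add]
    push_cast at this ⊢
    linarith

end BirkhoffAverage

section Birkhoff

variable {α : Type*} [MeasurableSpace α] {T : α → α} {ν : Measure α} {f : α → ℝ} {C : ℝ}

theorem measurable_birkhoffSum (hT : Measurable T) (hf : Measurable f) (n : ℕ) :
    Measurable (birkhoffSum T f n) :=
  Finset.measurable_sum _ fun i _ => hf.comp (hT.iterate i)

theorem measurable_birkhoffAverage (hT : Measurable T) (hf : Measurable f) (n : ℕ) :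
    Measurable (birkhoffAverage ℝ T f n) :=
  (measurable_birkhoffSum hT hf n).const_smul ((n : ℝ)⁻¹)

theorem MeasureTheory.MeasurePreserving.integral_birkhoffSum (hT : MeasurePreserving T ν ν)
    {g : α → ℝ} (hg : Integrable g ν) (n : ℕ) :
    ∫ x, birkhoffSum T g n x ∂ν = n * ∫ x, g x ∂ν := by
  have hcomp : ∀ i, ∫ x, g (T^[i] x) ∂ν = ∫ x, g x ∂ν := fun i => by
    conv_rhs => rw [← (hT.iterate i).map_eq]
    rw [integral_map (hT.iterate i).measurable.aemeasurable
      (by rw [(hT.iterate i).map_eq]; exact hg.aestronglyMeasurable)]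
  simp only [birkhoffSum]
  rw [integral_finsetSum (f := fun i x => g (T^[i] x)) _
    fun i _ => (hT.iterate i).integrable_comp_of_integrable hg]
  simp [hcomp]

theorem le_integral_of_forall_exists_le_birkhoffSum [IsProbabilityMeasure ν]
    (hT : MeasurePreserving T ν ν) {g : α → ℝ} (hgi : Integrable g ν) (hg0 : ∀ x, 0 ≤ g x)
    {a : ℝ} (ha : 0 ≤ a) {N : ℕ} (h : ∀ x, ∃ n ∈ Finset.Icc 1 N, a * n ≤ birkhoffSum T g n x) :
    a ≤ ∫ x, g x ∂ν := by
  have hbound : ∀ᶠ M : ℕ in atTop, a - a * N / M ≤ ∫ x, g x ∂ν := by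
    filter_upwards [eventually_gt_atTop 0] with M hM
    have hMpos : (0 : ℝ) < M := by exact_mod_cast hM
    have hS : Integrable (birkhoffSum T g M) ν :=
      integrable_finsetSum _ fun i _ => (hT.iterate i).integrable_comp_of_integrable hgi
    have := integral_mono (integrable_const _) hS (le_birkhoffSum_of_forall_exists hg0 ha h M)
    rw [integral_const, probReal_univ, one_smul, hT.integral_birkhoffSum hgi] at this
    rw [show a - a * N / M = (a * M - a * N) / M by field_simp, div_le_iff₀ hMpos]
    linarith
  have hlim : Tendsto (fun M : ℕ => a - a * N / M) atTop (𝓝 a) := by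
    simpa using tendsto_const_nhds.sub (tendsto_const_div_atTop_nhds_zero_nat (a * N))
  exact le_of_tendsto hlim hbound

/-- Raising `f` by `a` on `B` makes every orbit reach an average `≥ a` within `N` steps. -/
theorem le_integral_add_measureReal_mul [IsProbabilityMeasure ν] (hT : MeasurePreserving T ν ν)
    (hfi : Integrable f ν) (hf0 : ∀ x, 0 ≤ f x) {a : ℝ} (ha : 0 ≤ a) {B : Set α}
    (hB : MeasurableSet B) {N : ℕ} (hN : 1 ≤ N)
    (hstop : ∀ x ∉ B, ∃ n ∈ Finset.Icc 1 N, a * n ≤ birkhoffSum T f n x) :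
    a ≤ ∫ x, f x ∂ν + ν.real B * a := by
  have hind : Integrable (B.indicator fun _ => a) ν := (integrable_const a).indicator hB
  have hind0 : ∀ x, 0 ≤ B.indicator (fun _ => a) x := indicator_nonneg fun _ _ => ha
  have hle : ∀ n x, birkhoffSum T f n x ≤ birkhoffSum T (f + B.indicator fun _ => a) n x :=
    fun n x => Finset.sum_le_sum fun i _ => le_add_of_nonneg_right (hind0 _)
  have := le_integral_of_forall_exists_le_birkhoffSum hT (hfi.add hind)
    (fun x => add_nonneg (hf0 x) (hind0 x)) ha fun x => by
      by_cases hx : x ∈ B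
      · exact ⟨1, Finset.mem_Icc.2 ⟨le_rfl, hN⟩, by simpa [hx] using hf0 x⟩
      · obtain ⟨n, hn, han⟩ := hstop x hx
        exact ⟨n, hn, han.trans (hle n x)⟩
  rwa [Pi.add_def, integral_add hfi hind, integral_indicator_const _ hB, smul_eq_mul] at this

theorem le_integral_of_ae_exists_lt_birkhoffSum [IsProbabilityMeasure ν]
    (hT : MeasurePreserving T ν ν) (hfm : Measurable f) (hfi : Integrable f ν)
    (hf0 : ∀ x, 0 ≤ f x) {a : ℝ} (h : ∀ᵐ x ∂ν, ∃ n, 1 ≤ n ∧ a * n < birkhoffSum T f n x) :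
    a ≤ ∫ x, f x ∂ν := by
  rcases lt_or_ge a 0 with ha | ha
  · exact ha.le.trans (integral_nonneg hf0)
  set B : ℕ → Set α := fun N => ⋂ n ∈ Finset.Icc 1 N, {x | birkhoffSum T f n x ≤ a * n}
  have hBm : ∀ N, MeasurableSet (B N) := fun N => Finset.measurableSet_biInter _ fun n _ =>
    measurableSet_le (measurable_birkhoffSum hT.measurable hfm n) measurable_const
  have hBanti : Antitone B := fun N N' hNN' x hx =>
    mem_iInter₂.2 fun n hn => mem_iInter₂.1 hx n (Finset.Icc_subset_Icc_right hNN' hn)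
  have hBnull : ν (⋂ N, B N) = 0 := by
    refine measure_mono_null (μ := ν) (fun x hx => ?_) (ae_iff.1 h)
    rintro ⟨n, hn, han⟩
    exact not_le.2 han (mem_iInter₂.1 (mem_iInter.1 hx n) n (Finset.mem_Icc.2 ⟨hn, le_rfl⟩))
  have hlim : Tendsto (fun N => ∫ x, f x ∂ν + ν.real (B N) * a) atTop (𝓝 (∫ x, f x ∂ν)) := by
    have := tendsto_measure_iInter_atTop (μ := ν) (fun N => (hBm N).nullMeasurableSet) hBanti
      ⟨0, measure_ne_top _ _⟩
    rw [hBnull] at this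
    simpa [measureReal_def] using
      (ENNReal.tendsto_toReal ENNReal.zero_ne_top).comp this |>.mul_const a
        |>.const_add (∫ x, f x ∂ν)
  refine ge_of_tendsto hlim ?_
  filter_upwards [eventually_ge_atTop 1] with N hN
  refine le_integral_add_measureReal_mul hT hfi hf0 ha (hBm N) hN fun x hx => ?_
  simp only [B, mem_iInter, mem_ofPred_eq, not_forall, not_le] at hx
  obtain ⟨n, hn, han⟩ := hx
  exact ⟨n, hn, han.le⟩

/-- The limsup of the averages is `T`-invariant, hence a.e. equal to a constant `c`; for
`a < c` almost every orbit has an average above `a`, so `a ≤ ∫ f`. -/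
theorem Ergodic.ae_limsup_birkhoffAverage_le_integral [IsProbabilityMeasure ν]
    (hT : Ergodic T ν) (hfm : Measurable f) (hf0 : ∀ x, 0 ≤ f x) (hfC : ∀ x, f x ≤ C) :
    ∀ᵐ x ∂ν, limsup (fun n => birkhoffAverage ℝ T f n x) atTop ≤ ∫ x, f x ∂ν := by
  have hfC' : ∀ x, |f x| ≤ C := fun x => abs_le.2 ⟨by linarith [hf0 x, hfC x], hfC x⟩
  obtain ⟨c, hc⟩ := hT.toPreErgodic.ae_eq_const_of_ae_eq_comp
    (Measurable.limsup fun n => measurable_birkhoffAverage hT.measurable hfm n)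
    (funext fun x => limsup_birkhoffAverage_apply (T := T) hfC' x)
  suffices c ≤ ∫ x, f x ∂ν by
    filter_upwards [hc] with x hx
    exact hx.trans_le this
  refine le_of_forall_lt_imp_le_of_dense fun a ha => ?_
  refine le_integral_of_ae_exists_lt_birkhoffSum hT.toMeasurePreserving hfm
    (.of_bound hfm.aestronglyMeasurable C (ae_of_all _ hfC')) hf0 ?_
  filter_upwards [hc] with x hx
  have hfreq : ∃ᶠ n in atTop, a < birkhoffAverage ℝ T f n x :=
    frequently_lt_of_lt_limsup (isCoboundedUnder_le_of_le atTop (x := -C) fun n =>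
      (abs_le.1 (abs_birkhoffAverage_le hfC' n x)).1) (by rw [hx]; exact ha)
  obtain ⟨n, hn, han⟩ := (hfreq.and_eventually (eventually_ge_atTop 1)).exists
  refine ⟨n, han, ?_⟩
  rwa [birkhoffAverage, smul_eq_mul, inv_mul_eq_div, lt_div_iff₀ (by positivity)] at hn

theorem Ergodic.ae_eventually_birkhoffAverage_lt [IsProbabilityMeasure ν] (hT : Ergodic T ν)
    (hfm : Measurable f) (hfC : ∀ x, |f x| ≤ C) :
    ∀ᵐ x ∂ν, ∀ b, ∫ x, f x ∂ν < b → ∀ᶠ n in atTop, birkhoffAverage ℝ T f n x < b := by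
  have hfC₁ : ∀ x, -C ≤ f x ∧ f x ≤ C := fun x => abs_le.1 (hfC x)
  have hshift : ∀ x, |C + f x| ≤ C + C := fun x =>
    abs_le.2 ⟨by linarith [hfC₁ x], by linarith [hfC₁ x]⟩
  have hint : ∫ x, C + f x ∂ν = C + ∫ x, f x ∂ν := by
    rw [integral_add (integrable_const C) (.of_bound hfm.aestronglyMeasurable C (ae_of_all _ hfC)),
      integral_const, probReal_univ, one_smul]
  have hup := hT.ae_limsup_birkhoffAverage_le_integral (f := fun x => C + f x)
    (measurable_const.add hfm) (fun x => by linarith [hfC₁ x]) fun x => (abs_le.1 (hshift x)).2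
  rw [hint] at hup
  filter_upwards [hup] with x hx b hb
  have hbdd : IsBoundedUnder (· ≤ ·) atTop fun n => birkhoffAverage ℝ T (fun y => C + f y) n x :=
    isBoundedUnder_of ⟨C + C, fun n => (abs_le.1 (abs_birkhoffAverage_le hshift n x)).2⟩
  filter_upwards [eventually_lt_of_limsup_lt (hx.trans_lt (add_lt_add_right hb C)) hbdd,
    eventually_ne_atTop 0] with n hn hn0
  rw [birkhoffAverage_const_add C hn0] at hn
  linarith

theorem Ergodic.ae_tendsto_birkhoffAverage [IsProbabilityMeasure ν] (hT : Ergodic T ν)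
    (hfm : Measurable f) (hfC : ∀ x, |f x| ≤ C) :
    ∀ᵐ x ∂ν, Tendsto (fun n => birkhoffAverage ℝ T f n x) atTop (𝓝 (∫ x, f x ∂ν)) := by
  filter_upwards [hT.ae_eventually_birkhoffAverage_lt hfm hfC,
    hT.ae_eventually_birkhoffAverage_lt (f := -f) hfm.neg (by simpa using hfC)]
    with x hup hdown
  refine tendsto_order.2 ⟨fun b hb => ?_, hup⟩
  filter_upwards [hdown (-b) (by rw [integral_neg']; linarith)] with n hn
  rw [birkhoffAverage_neg, Pi.neg_apply, Pi.neg_apply] at hn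
  linarith

end Birkhoff

section ApproximationError

variable {p : ℝ} {n k : ℕ}

theorem sigmaP_nonneg (y : Fin n → ℝ) : 0 ≤ sigmaP p n k y :=
  Real.sInf_nonneg (by rintro _ ⟨S, -, rfl⟩; positivity)

theorem sigmaTilde_nonneg (y : Fin n → ℝ) : 0 ≤ sigmaTilde p n k y :=
  div_nonneg (sigmaP_nonneg y) (by positivity)

theorem sigmaP_le (y : Fin n → ℝ) {S : Finset (Fin n)} (hS : S.card = k) :
    sigmaP p n k y ≤ (∑ i ∈ Sᶜ, |y i| ^ p) ^ (1 / p) :=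
  csInf_le ⟨0, by rintro _ ⟨S, -, rfl⟩; positivity⟩ ⟨S, hS, rfl⟩

-- There is no `k`-subset of `Fin n`, and `sInf ∅ = 0`.
theorem sigmaP_eq_zero_of_lt (hnk : n < k) (y : Fin n → ℝ) : sigmaP p n k y = 0 := by
  unfold sigmaP
  convert Real.sInf_empty
  refine eq_empty_of_forall_notMem ?_
  rintro _ ⟨S, hS, -⟩
  have := S.card_le_univ
  simp only [Fintype.card_fin] at this
  omega

theorem sigmaTilde_le_of_card_le (hp : 0 < p) (y : Fin n → ℝ) {t : ℝ} (ht : 0 ≤ t)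
    (hk : (Finset.univ.filter fun i => t < |y i|).card ≤ k) :
    sigmaTilde p n k y ≤ (n * t ^ p / ∑ i, |y i| ^ p) ^ (1 / p) := by
  rcases le_or_gt k n with hkn | hnk
  · obtain ⟨S, hlarge, hS⟩ := Finset.exists_superset_card_eq hk (by simpa using hkn)
    have hsmall : ∑ i ∈ Sᶜ, |y i| ^ p ≤ n * t ^ p := calc
      ∑ i ∈ Sᶜ, |y i| ^ p ≤ ∑ i ∈ Sᶜ, t ^ p := Finset.sum_le_sum fun i hi =>
          Real.rpow_le_rpow (abs_nonneg _) (not_lt.1 fun h =>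
            Finset.mem_compl.1 hi (hlarge (by simp [h]))) hp.le
      _ ≤ n * t ^ p := by
          rw [Finset.sum_const, nsmul_eq_mul]
          gcongr
          simpa using Sᶜ.card_le_univ
    rw [sigmaTilde, Real.div_rpow (by positivity) (by positivity)]
    gcongr
    exact (sigmaP_le y hS).trans (by gcongr)
  · rw [sigmaTilde, sigmaP_eq_zero_of_lt hnk, zero_div]
    positivity

theorem tendsto_sigmaTilde_zero (hp : 0 < p) {x : ℕ → ℝ} {k : ℕ → ℕ} {t : ℝ} (ht : 0 ≤ t)
    (hk : ∀ᶠ n in atTop, ((Finset.range n).filter fun i => t < |x i|).card ≤ k n)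
    (hx : Tendsto (fun n : ℕ => (∑ i ∈ Finset.range n, |x i| ^ p) / (n : ℝ)) atTop atTop) :
    Tendsto (fun n => sigmaTilde p n (k n) (proj n x)) atTop (𝓝 0) := by
  have hbound : Tendsto
      (fun n : ℕ => (t ^ p / ((∑ i ∈ Finset.range n, |x i| ^ p) / n)) ^ (1 / p)) atTop (𝓝 0) := by
    simpa [Real.zero_rpow (inv_pos.2 hp).ne'] using
      ((tendsto_const_nhds (x := t ^ p)).div_atTop hx).rpow_const (Or.inr (one_div_pos.2 hp).le)
  refine squeeze_zero' (Eventually.of_forall fun n => sigmaTilde_nonneg _) ?_ hbound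
  filter_upwards [hk] with n hn
  convert sigmaTilde_le_of_card_le hp (proj n x) ht ?_ using 2
  · simp only [proj]
    rw [div_div_eq_mul_div, mul_comm, Fin.sum_univ_eq_sum_range (fun i => |x i| ^ p)]
  · rw [Finset.card_filter]
    exact (Fin.sum_univ_eq_sum_range (fun i => if t < |x i| then 1 else 0) n).trans_le
      (by rwa [← Finset.card_filter])

end ApproximationError

theorem measurable_shift : Measurable shift :=
  measurable_pi_lambda _ fun n => measurable_pi_apply (n + 1)

theorem shift_iterate_apply (i : ℕ) (x : ℕ → ℝ) (n : ℕ) : shift^[i] x n = x (n + i) := by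
  induction i generalizing x with
  | zero => rfl
  | succ i ih => rw [Function.iterate_succ_apply, ih]; rfl

theorem birkhoffAverage_shift_comp_eval_zero (φ : ℝ → ℝ) (n : ℕ) (x : ℕ → ℝ) :
    birkhoffAverage ℝ shift (fun y => φ (y 0)) n x = (∑ i ∈ Finset.range n, φ (x i)) / n := by
  simp [birkhoffAverage, birkhoffSum, shift_iterate_apply, inv_mul_eq_div]

instance isProbabilityMeasure_marginal1 (ν : Measure (ℕ → ℝ)) [IsProbabilityMeasure ν] :
    IsProbabilityMeasure (marginal1 ν) :=
  Measure.isProbabilityMeasure_map (measurable_pi_apply 0).aemeasurable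

namespace HasStationaryMean

variable {μ ν : Measure (ℕ → ℝ)}

theorem measure_eq_of_preimage_shift_eq [IsFiniteMeasure μ] [IsFiniteMeasure ν]
    (h : HasStationaryMean μ ν) {G : Set (ℕ → ℝ)} (hG : MeasurableSet G)
    (hinv : shift ⁻¹' G = G) : μ G = ν G := by
  have hconst : Tendsto (fun n : ℕ => (∑ i ∈ Finset.range n, (μ (shift^[i] ⁻¹' G)).toReal) / n)
      atTop (𝓝 (μ G).toReal) := by
    refine tendsto_const_nhds.congr' ?_
    filter_upwards [eventually_ne_atTop 0] with n hn
    have hit : ∀ i, shift^[i] ⁻¹' G = G := (Function.IsFixedPt.preimage_iterate hinv ·)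
    simp [hit, hn]
  exact (ENNReal.toReal_eq_toReal_iff' (measure_ne_top _ _) (measure_ne_top _ _)).1
    (tendsto_nhds_unique hconst (h G hG))

theorem measurePreserving_shift [IsProbabilityMeasure μ] [IsFiniteMeasure ν]
    (h : HasStationaryMean μ ν) : MeasurePreserving shift ν ν := by
  refine ⟨measurable_shift, Measure.ext fun F hF => ?_⟩
  rw [Measure.map_apply measurable_shift hF]
  have h₁ := tendsto_sum_range_succ_div (C := 1)
    (fun i => by rw [abs_of_nonneg ENNReal.toReal_nonneg]; exact measureReal_le_one) (h F hF)
  have h₂ := h _ (measurable_shift hF)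
  simp only [← preimage_comp, ← Function.iterate_succ'] at h₂
  exact (ENNReal.toReal_eq_toReal_iff' (measure_ne_top _ _) (measure_ne_top _ _)).1
    (tendsto_nhds_unique h₂ h₁)

theorem ergodic_shift [IsProbabilityMeasure μ] [IsFiniteMeasure ν] (h : HasStationaryMean μ ν)
    (herg : IsErgodicShift μ) : Ergodic shift ν where
  toMeasurePreserving := h.measurePreserving_shift
  aeconst_set s hs hinv := by
    rw [eventuallyConst_set']
    rcases herg s hs hinv with hμ | hμ
    · rw [ae_eq_empty, ← h.measure_eq_of_preimage_shift_eq hs hinv, hμ]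
      exact Or.inl rfl
    · rw [ae_eq_univ, ← h.measure_eq_of_preimage_shift_eq hs.compl (by rw [preimage_compl, hinv]),
        prob_compl_eq_zero_iff hs]
      exact Or.inr hμ

theorem ae_mem_of_preimage_shift_eq [IsFiniteMeasure μ] [IsFiniteMeasure ν]
    (h : HasStationaryMean μ ν) {G : Set (ℕ → ℝ)} (hG : MeasurableSet G)
    (hinv : shift ⁻¹' G = G) (hν : ∀ᵐ x ∂ν, x ∈ G) : ∀ᵐ x ∂μ, x ∈ G := by
  rw [ae_iff] at hν ⊢
  change ν Gᶜ = 0 at hν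
  change μ Gᶜ = 0
  rwa [h.measure_eq_of_preimage_shift_eq hG.compl (by rw [preimage_compl, hinv])]

section Probability

variable [IsProbabilityMeasure μ] [IsProbabilityMeasure ν]

theorem ae_tendsto_sum_div (h : HasStationaryMean μ ν) (herg : IsErgodicShift μ) {φ : ℝ → ℝ}
    {C : ℝ} (hφ : Measurable φ) (hφC : ∀ s, |φ s| ≤ C) :
    ∀ᵐ x ∂μ, Tendsto (fun n : ℕ => (∑ i ∈ Finset.range n, φ (x i)) / n) atTop
      (𝓝 (∫ y, φ (y 0) ∂ν)) := by
  have hfm : Measurable fun y : ℕ → ℝ => φ (y 0) := hφ.comp (measurable_pi_apply 0)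
  have hfC : ∀ y : ℕ → ℝ, |φ (y 0)| ≤ C := fun y => hφC _
  simp only [← birkhoffAverage_shift_comp_eval_zero]
  refine h.ae_mem_of_preimage_shift_eq
    (measurableSet_tendsto _ fun n => measurable_birkhoffAverage measurable_shift hfm n) ?_
    ((h.ergodic_shift herg).ae_tendsto_birkhoffAverage hfm hfC)
  ext x
  exact tendsto_birkhoffAverage_apply_iff hfC x

theorem ae_tendsto_card_abs_gt_div (h : HasStationaryMean μ ν) (herg : IsErgodicShift μ)
    (t : ℝ) :
    ∀ᵐ x ∂μ, Tendsto (fun n : ℕ => (((Finset.range n).filter fun i => t < |x i|).card : ℝ) / n)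
      atTop (𝓝 ((marginal1 ν).real {s | t < |s|})) := by
  have hS : MeasurableSet {s : ℝ | t < |s|} := measurableSet_lt measurable_const measurable_abs
  have := h.ae_tendsto_sum_div herg (φ := {s : ℝ | t < |s|}.indicator 1) (C := 1)
    (measurable_one.indicator hS) fun s => by
      by_cases hs : s ∈ {s : ℝ | t < |s|} <;> simp [hs]
  rw [← integral_indicator_one hS, marginal1, integral_map (measurable_pi_apply 0).aemeasurable
    (stronglyMeasurable_one.indicator hS).aestronglyMeasurable]
  simpa [Set.indicator_apply, Finset.sum_boole] using this

theorem ae_tendsto_sum_rpow_div_atTop (h : HasStationaryMean μ ν) (herg : IsErgodicShift μ)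
    {p : ℝ} (hmom : momentP p (marginal1 ν) = ∞) :
    ∀ᵐ x ∂μ, Tendsto (fun n : ℕ => (∑ i ∈ Finset.range n, |x i| ^ p) / (n : ℝ)) atTop atTop := by
  have hrpow : Measurable fun s : ℝ => |s| ^ p := by fun_prop
  have htrunc : ∀ M : ℕ, ∀ᵐ x ∂μ, Tendsto
      (fun n : ℕ => (∑ i ∈ Finset.range n, min (|x i| ^ p) (M : ℝ)) / n) atTop
      (𝓝 (∫ s, min (|s| ^ p) (M : ℝ) ∂(marginal1 ν))) := fun M => by
    rw [marginal1, integral_map (measurable_pi_apply 0).aemeasurable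
      (hrpow.min measurable_const).aestronglyMeasurable]
    refine h.ae_tendsto_sum_div herg (φ := fun s => min (|s| ^ p) (M : ℝ)) (C := M)
      (hrpow.min measurable_const) fun s => ?_
    rw [abs_of_nonneg (le_min (by positivity) M.cast_nonneg)]
    exact min_le_right _ _
  have hmoments :=
    tendsto_integral_min_atTop_of_lintegral_eq_top hrpow (fun s => by positivity) hmom
  filter_upwards [ae_all_iff.2 htrunc] with x hx
  refine tendsto_atTop.2 fun K => ?_
  obtain ⟨M, hM⟩ := (hmoments.eventually_gt_atTop K).exists
  filter_upwards [(hx M).eventually_const_lt hM] with n hn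
  exact hn.le.trans (div_le_div_of_nonneg_right
    (Finset.sum_le_sum fun i _ => min_le_left _ _) n.cast_nonneg)

end Probability

end HasStationaryMean

/-- Theorem 1, part (i): for an AMS ergodic process whose stationary mean has infinite
`p`-th marginal moment, the relative approximation error tends to `0` almost surely at
every rate `r ∈ (0,1]`. -/
theorem ams_ergodic_infinite_moment_zero_error
    (p : ℝ) (hp : 0 < p) (μ ν : Measure (ℕ → ℝ))
    [IsProbabilityMeasure μ] [IsProbabilityMeasure ν]
    (hAMS : HasStationaryMean μ ν) (herg : IsErgodicShift μ)
    (hmom : momentP p (marginal1 ν) = ∞) :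
    ∀ r ∈ Set.Ioc (0:ℝ) 1, ∀ k : ℕ → ℕ,
      Tendsto (fun n : ℕ => (k n : ℝ) / n) atTop (𝓝 r) →
      ∀ᵐ x ∂μ, Tendsto (fun n : ℕ => sigmaTilde p n (k n) (proj n x)) atTop (𝓝 0) := by
  intro r hr k hk
  obtain ⟨t, ht, ht0⟩ := (((tendsto_measureReal_abs_gt_atTop (marginal1 ν)).eventually_lt_const
    hr.1).and (eventually_ge_atTop 0)).exists
  obtain ⟨c, hc₁, hc₂⟩ := exists_between ht
  filter_upwards [hAMS.ae_tendsto_card_abs_gt_div herg t,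
    hAMS.ae_tendsto_sum_rpow_div_atTop herg hmom] with x hfreq henergy
  refine tendsto_sigmaTilde_zero hp ht0 ?_ henergy
  filter_upwards [hfreq.eventually_lt_const hc₁, hk.eventually_const_lt hc₂,
    eventually_gt_atTop 0] with n hn₁ hn₂ hn
  exact_mod_cast ((div_lt_div_iff_of_pos_right (by positivity)).1 (hn₁.trans hn₂)).le
end
end

section
/- Let p > 0 and let ν be a probability measure on ℝ with 0 < ∫_ℝ |x|^p dν(x) < ∞. Then the approximation error function f_{p,ν} is continuous on (0,1], and it is strictly decreasing on (0, 1 − ν({0})]: for every pair r₁, r₂ with 0 < r₁ < r₂ ≤ 1 − ν({0}), one has f_{p,ν}(r₂) < f_{p,ν}(r₁). -/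
open MeasureTheory Filter Set
open scoped ENNReal Topology Classical

noncomputable section

/-! Let `I(A) = ∫_A |x|^p dν`, `M = I(ℝ)`, and for `τ ≥ 0` let
`h_τ(r) = I(C_τ) + (r − ν(C_τ)) τ^p`, an affine function of `r` with slope `τ^p`.
Comparing `h_s` and `h_t` on the annulus between `s` and `t` shows that `h_τ(r)` is the minimum of
all `h_s(r)` as soon as `ν(C_τ) ≤ r ≤ ν(B_τ)` (the Rockafellar–Uryasev formula for the integral
of the quantile function of `|x|^p`). The quantile `τ(r) = sup {τ ≥ 0 | r ≤ ν(B_τ)}` satisfies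
this condition, so `G(r) = h_{τ(r)}(r)` is that minimum, and both branches of the graph `F_ν` are
instances of it: `f_{p,ν}(r) = (1 − G(r)/M)^{1/p}`.

Being a minimum of affine functions, `G` satisfies
`(r₂ − r₁) τ(r₂)^p ≤ G(r₂) − G(r₁) ≤ (r₂ − r₁) τ(r₁)^p`. As `τ` is antitone, `G` is Lipschitz on
`[c, 1]` for every `c > 0`, and it is strictly increasing wherever `τ > 0`, which is the case for
`r < ν(C_0) = 1 − ν({0})`. -/

section TailSets

lemma mem_Btau {τ x : ℝ} : x ∈ Btau τ ↔ τ ≤ |x| := by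
  simp only [Btau, mem_union, mem_Iic, mem_Ici, le_abs, le_neg]
  tauto

lemma mem_Ctau {τ x : ℝ} : x ∈ Ctau τ ↔ τ < |x| := by
  simp only [Ctau, mem_union, mem_Iio, mem_Ioi, lt_abs, lt_neg]
  tauto

lemma mem_pair_neg_self {τ x : ℝ} (hτ : 0 ≤ τ) : x ∈ ({-τ, τ} : Set ℝ) ↔ |x| = τ := by
  simp only [mem_insert_iff, mem_singleton_iff, abs_eq hτ]
  tauto

lemma measurableSet_Btau (τ : ℝ) : MeasurableSet (Btau τ) :=
  measurableSet_Iic.union measurableSet_Ici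

lemma measurableSet_Ctau (τ : ℝ) : MeasurableSet (Ctau τ) :=
  measurableSet_Iio.union measurableSet_Ioi

lemma Btau_antitone : Antitone Btau :=
  fun _ _ h _ hx => mem_Btau.2 (h.trans (mem_Btau.1 hx))

lemma Ctau_antitone : Antitone Ctau :=
  fun _ _ h _ hx => mem_Ctau.2 (h.trans_lt (mem_Ctau.1 hx))

lemma Btau_subset_Ctau {s t : ℝ} (h : s < t) : Btau t ⊆ Ctau s :=
  fun _ hx => mem_Ctau.2 (h.trans_le (mem_Btau.1 hx))

lemma Btau_eq_Ctau_union {τ : ℝ} (hτ : 0 ≤ τ) : Btau τ = Ctau τ ∪ {-τ, τ} := by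
  ext x
  simp only [mem_union, mem_Btau, mem_Ctau, mem_pair_neg_self hτ, le_iff_lt_or_eq, eq_comm]

lemma disjoint_Ctau_pair {τ : ℝ} (hτ : 0 ≤ τ) : Disjoint (Ctau τ) {-τ, τ} :=
  disjoint_left.2 fun _ hC hD => (mem_Ctau.1 hC).ne ((mem_pair_neg_self hτ).1 hD).symm

lemma Btau_zero : Btau 0 = univ :=
  eq_univ_of_forall fun x => mem_Btau.2 (abs_nonneg x)

lemma Ctau_zero : Ctau 0 = {0}ᶜ := by
  ext x
  simp [mem_Ctau]

lemma iInter_Btau_sub_one_div (τ : ℝ) : ⋂ n : ℕ, Btau (τ - 1 / (n + 1)) = Btau τ := by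
  ext x
  simp only [mem_iInter, mem_Btau]
  refine ⟨fun h => le_of_forall_pos_le_add fun ε hε => ?_, fun h n => ?_⟩
  · obtain ⟨n, hn⟩ := exists_nat_one_div_lt hε
    linarith [h n]
  · have : (0 : ℝ) ≤ 1 / (n + 1) := by positivity
    linarith

lemma iUnion_Btau_add_one_div (τ : ℝ) : ⋃ n : ℕ, Btau (τ + 1 / (n + 1)) = Ctau τ := by
  ext x
  simp only [mem_iUnion, mem_Btau, mem_Ctau]
  refine ⟨fun ⟨n, hn⟩ => ?_, fun h => ?_⟩
  · have : (0 : ℝ) < 1 / (n + 1) := by positivity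
    linarith
  · obtain ⟨n, hn⟩ := exists_nat_one_div_lt (sub_pos.2 h)
    exact ⟨n, by linarith⟩

lemma iInter_Btau_natCast : ⋂ n : ℕ, Btau n = ∅ :=
  eq_empty_of_forall_notMem fun x hx =>
    let ⟨n, hn⟩ := exists_nat_gt |x|
    hn.not_ge (mem_Btau.1 (mem_iInter.1 hx n))

end TailSets

section PartialMoment

variable {p : ℝ} {ν : Measure ℝ}

def partialMoment (p : ℝ) (ν : Measure ℝ) (A : Set ℝ) : ℝ :=
  (∫⁻ x in A, ENNReal.ofReal (|x| ^ p) ∂ν).toReal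

lemma setLIntegral_rpow_abs_ne_top (hfin : momentP p ν ≠ ∞) (A : Set ℝ) :
    ∫⁻ x in A, ENNReal.ofReal (|x| ^ p) ∂ν ≠ ∞ :=
  ne_top_of_le_ne_top hfin (setLIntegral_le_lintegral _ _)

lemma partialMoment_le_moment (hfin : momentP p ν ≠ ∞) (A : Set ℝ) :
    partialMoment p ν A ≤ (momentP p ν).toReal :=
  ENNReal.toReal_mono hfin (setLIntegral_le_lintegral _ _)

lemma vP_eq_partialMoment_div (A : Set ℝ) :
    vP p ν A = partialMoment p ν A / (momentP p ν).toReal := by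
  rw [vP, ENNReal.toReal_div]
  rfl

lemma partialMoment_union (hfin : momentP p ν ≠ ∞) {A B : Set ℝ} (hB : MeasurableSet B)
    (hAB : Disjoint A B) :
    partialMoment p ν (A ∪ B) = partialMoment p ν A + partialMoment p ν B := by
  rw [partialMoment, lintegral_union hB hAB, ENNReal.toReal_add
    (setLIntegral_rpow_abs_ne_top hfin A) (setLIntegral_rpow_abs_ne_top hfin B)]
  rfl

lemma partialMoment_diff (hfin : momentP p ν ≠ ∞) {A B : Set ℝ} (hA : MeasurableSet A)
    (hAB : A ⊆ B) : partialMoment p ν (B \ A) = partialMoment p ν B - partialMoment p ν A := by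
  rw [eq_sub_iff_add_eq', partialMoment, partialMoment, partialMoment, ← ENNReal.toReal_add
    (setLIntegral_rpow_abs_ne_top hfin _) (setLIntegral_rpow_abs_ne_top hfin _),
    ← lintegral_inter_add_sdiff _ B hA, inter_eq_right.2 hAB]

lemma rpow_mul_measureReal_le_partialMoment (hp : 0 ≤ p) (hfin : momentP p ν ≠ ∞) {a : ℝ}
    {A : Set ℝ} (ha : 0 ≤ a) (hA : MeasurableSet A) (h : ∀ x ∈ A, a ≤ |x|) :
    a ^ p * ν.real A ≤ partialMoment p ν A := by
  have key : ENNReal.ofReal (a ^ p) * ν A ≤ ∫⁻ x in A, ENNReal.ofReal (|x| ^ p) ∂ν := by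
    rw [← setLIntegral_const]
    exact setLIntegral_mono' hA fun x hx =>
      ENNReal.ofReal_le_ofReal (Real.rpow_le_rpow ha (h x hx) hp)
  have := ENNReal.toReal_mono (setLIntegral_rpow_abs_ne_top hfin A) key
  rwa [ENNReal.toReal_mul, ENNReal.toReal_ofReal (Real.rpow_nonneg ha p)] at this

lemma partialMoment_le_rpow_mul_measureReal [IsFiniteMeasure ν] (hp : 0 ≤ p) {a : ℝ}
    {A : Set ℝ} (ha : 0 ≤ a) (hA : MeasurableSet A) (h : ∀ x ∈ A, |x| ≤ a) :
    partialMoment p ν A ≤ a ^ p * ν.real A := by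
  have key : ∫⁻ x in A, ENNReal.ofReal (|x| ^ p) ∂ν ≤ ENNReal.ofReal (a ^ p) * ν A := by
    rw [← setLIntegral_const]
    exact setLIntegral_mono' hA fun x hx =>
      ENNReal.ofReal_le_ofReal (Real.rpow_le_rpow (abs_nonneg x) (h x hx) hp)
  have := ENNReal.toReal_mono (ENNReal.mul_ne_top ENNReal.ofReal_ne_top (measure_ne_top ν A)) key
  rwa [ENNReal.toReal_mul, ENNReal.toReal_ofReal (Real.rpow_nonneg ha p)] at this

lemma partialMoment_pair [IsFiniteMeasure ν] (hp : 0 ≤ p) (hfin : momentP p ν ≠ ∞) {τ : ℝ}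
    (hτ : 0 ≤ τ) : partialMoment p ν {-τ, τ} = τ ^ p * ν.real {-τ, τ} := by
  have hD : MeasurableSet ({-τ, τ} : Set ℝ) := (measurableSet_singleton τ).insert (-τ)
  have habs : ∀ x ∈ ({-τ, τ} : Set ℝ), |x| = τ := fun x hx => (mem_pair_neg_self hτ).1 hx
  exact le_antisymm (partialMoment_le_rpow_mul_measureReal hp hτ hD fun x hx => (habs x hx).le)
    (rpow_mul_measureReal_le_partialMoment hp hfin hτ hD fun x hx => (habs x hx).ge)

lemma partialMoment_Btau (hfin : momentP p ν ≠ ∞) {τ : ℝ} (hτ : 0 ≤ τ) :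
    partialMoment p ν (Btau τ) = partialMoment p ν (Ctau τ) + partialMoment p ν {-τ, τ} := by
  rw [Btau_eq_Ctau_union hτ,
    partialMoment_union hfin ((measurableSet_singleton τ).insert (-τ)) (disjoint_Ctau_pair hτ)]

lemma measureReal_Btau [IsFiniteMeasure ν] {τ : ℝ} (hτ : 0 ≤ τ) :
    ν.real (Btau τ) = ν.real (Ctau τ) + ν.real {-τ, τ} := by
  rw [Btau_eq_Ctau_union hτ,
    measureReal_union (disjoint_Ctau_pair hτ) ((measurableSet_singleton τ).insert (-τ))]

end PartialMoment

section CapturedMomentBy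

variable {p : ℝ} {ν : Measure ℝ}

/-- `h_τ(r)`: the moment captured by keeping `C_τ` and filling the remaining rate at level `τ`. -/
def capturedMomentBy (p : ℝ) (ν : Measure ℝ) (τ r : ℝ) : ℝ :=
  partialMoment p ν (Ctau τ) + (r - ν.real (Ctau τ)) * τ ^ p

lemma capturedMomentBy_le_of_lt [IsFiniteMeasure ν] (hp : 0 ≤ p) (hfin : momentP p ν ≠ ∞)
    {r s t : ℝ} (hs : 0 ≤ s) (hst : s < t) (hr : r ≤ ν.real (Btau t)) :
    capturedMomentBy p ν t r ≤ capturedMomentBy p ν s r := by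
  have ht : 0 ≤ t := hs.trans hst.le
  have hsub := Btau_subset_Ctau hst
  have hannulus : s ^ p * (ν.real (Ctau s) - ν.real (Btau t)) ≤
      partialMoment p ν (Ctau s) - partialMoment p ν (Btau t) := by
    rw [← measureReal_sdiff hsub (measurableSet_Btau t),
      ← partialMoment_diff hfin (measurableSet_Btau t) hsub]
    exact rpow_mul_measureReal_le_partialMoment hp hfin hs
      ((measurableSet_Ctau s).diff (measurableSet_Btau t)) fun x hx => (mem_Ctau.1 hx.1).le
  have hpow : s ^ p ≤ t ^ p := Real.rpow_le_rpow hs hst.le hp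
  have hI := partialMoment_Btau hfin ht (ν := ν)
  have hν := measureReal_Btau ht (ν := ν)
  rw [partialMoment_pair hp hfin ht] at hI
  unfold capturedMomentBy
  linear_combination hannulus - hI + t ^ p * hν + mul_nonneg (sub_nonneg.2 hpow) (sub_nonneg.2 hr)

lemma capturedMomentBy_le_of_le [IsFiniteMeasure ν] (hp : 0 ≤ p) (hfin : momentP p ν ≠ ∞)
    {r s t : ℝ} (hs : 0 ≤ s) (hst : s ≤ t) (hr : ν.real (Ctau s) ≤ r) :
    capturedMomentBy p ν s r ≤ capturedMomentBy p ν t r := by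
  have hsub := Ctau_antitone hst
  have hannulus : partialMoment p ν (Ctau s) - partialMoment p ν (Ctau t) ≤
      t ^ p * (ν.real (Ctau s) - ν.real (Ctau t)) := by
    rw [← measureReal_sdiff hsub (measurableSet_Ctau t),
      ← partialMoment_diff hfin (measurableSet_Ctau t) hsub]
    exact partialMoment_le_rpow_mul_measureReal hp (hs.trans hst)
      ((measurableSet_Ctau s).diff (measurableSet_Ctau t)) fun x hx =>
        not_lt.1 (mem_Ctau.not.1 hx.2)
  have hpow : s ^ p ≤ t ^ p := Real.rpow_le_rpow hs hst hp
  unfold capturedMomentBy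
  linear_combination hannulus + mul_nonneg (sub_nonneg.2 hpow) (sub_nonneg.2 hr)

lemma capturedMomentBy_le [IsFiniteMeasure ν] (hp : 0 ≤ p) (hfin : momentP p ν ≠ ∞)
    {r s τ : ℝ} (hτ : 0 ≤ τ) (hs : 0 ≤ s) (hC : ν.real (Ctau τ) ≤ r)
    (hB : r ≤ ν.real (Btau τ)) : capturedMomentBy p ν τ r ≤ capturedMomentBy p ν s r := by
  rcases lt_or_ge s τ with h | h
  · exact capturedMomentBy_le_of_lt hp hfin hs h hB
  · exact capturedMomentBy_le_of_le hp hfin hτ h hC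

end CapturedMomentBy

section TailQuantile

variable {ν : Measure ℝ} [IsProbabilityMeasure ν] {r : ℝ}

lemma phiTail_antitone : Antitone (phiTail ν) :=
  fun _ _ h => ENNReal.toReal_mono (measure_ne_top ν _) (measure_mono (Btau_antitone h))

lemma phiTail_zero : phiTail ν 0 = 1 := by
  rw [phiTail, Btau_zero, measure_univ, ENNReal.toReal_one]

lemma exists_phiTail_lt (hr : 0 < r) : ∃ τ, phiTail ν τ < r := by
  have hinf : ⨅ n : ℕ, ν (Btau n) = 0 := by
    have hanti : Antitone fun n : ℕ => Btau n := Btau_antitone.comp_monotone Nat.mono_cast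
    rw [← hanti.measure_iInter (fun _ => (measurableSet_Btau _).nullMeasurableSet)
      ⟨0, measure_ne_top ν _⟩, iInter_Btau_natCast, measure_empty]
  obtain ⟨n, hn⟩ := iInf_lt_iff.1 (hinf ▸ ENNReal.ofReal_pos.2 hr)
  exact ⟨n, ENNReal.toReal_lt_of_lt_ofReal hn⟩

/-- The quantile `τ(r)` of `|x|` under `ν` at upper level `r`. -/
def tailQuantile (ν : Measure ℝ) (r : ℝ) : ℝ := sSup {τ | 0 ≤ τ ∧ r ≤ phiTail ν τ}

lemma le_tailQuantile (hr : 0 < r) {τ : ℝ} (hτ : 0 ≤ τ) (h : r ≤ phiTail ν τ) :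
    τ ≤ tailQuantile ν r := by
  obtain ⟨T, hT⟩ := exists_phiTail_lt (ν := ν) hr
  refine le_csSup ⟨T, fun τ' hτ' => ?_⟩ ⟨hτ, h⟩
  by_contra! hlt
  exact (hτ'.2.trans (phiTail_antitone hlt.le)).not_gt hT

lemma tailQuantile_nonneg (hr : r ∈ Ioc 0 1) : 0 ≤ tailQuantile ν r :=
  le_tailQuantile hr.1 le_rfl (phiTail_zero (ν := ν) ▸ hr.2)

lemma phiTail_lt_of_tailQuantile_lt (hr : r ∈ Ioc 0 1) {τ : ℝ} (h : tailQuantile ν r < τ) :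
    phiTail ν τ < r := by
  by_contra! hle
  exact h.not_ge (le_tailQuantile hr.1 ((tailQuantile_nonneg hr).trans h.le) hle)

lemma le_phiTail_of_lt_tailQuantile (hr : r ∈ Ioc 0 1) {τ : ℝ} (h : τ < tailQuantile ν r) :
    r ≤ phiTail ν τ := by
  obtain ⟨a, ha, hτa⟩ := exists_lt_of_lt_csSup (s := {τ | 0 ≤ τ ∧ r ≤ phiTail ν τ})
    ⟨0, le_rfl, phiTail_zero (ν := ν) ▸ hr.2⟩ h
  exact ha.2.trans (phiTail_antitone hτa.le)

lemma le_phiTail_tailQuantile (hr : r ∈ Ioc 0 1) : r ≤ phiTail ν (tailQuantile ν r) := by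
  set t := tailQuantile ν r
  have hanti : Antitone fun n : ℕ => Btau (t - 1 / (n + 1)) :=
    fun _ _ hmn => Btau_antitone (sub_le_sub_left (Nat.one_div_le_one_div hmn) t)
  have key : ENNReal.ofReal r ≤ ν (Btau t) := by
    rw [← iInter_Btau_sub_one_div t, hanti.measure_iInter
      (fun _ => (measurableSet_Btau _).nullMeasurableSet) ⟨0, measure_ne_top ν _⟩]
    exact le_iInf fun n => ENNReal.ofReal_le_of_le_toReal
      (le_phiTail_of_lt_tailQuantile hr (sub_lt_self t (by positivity)))
  exact (ENNReal.ofReal_le_iff_le_toReal (measure_ne_top ν _)).1 key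

lemma measureReal_Ctau_tailQuantile_le (hr : r ∈ Ioc 0 1) :
    ν.real (Ctau (tailQuantile ν r)) ≤ r := by
  set t := tailQuantile ν r
  have hmono : Monotone fun n : ℕ => Btau (t + 1 / (n + 1)) :=
    fun _ _ hmn => Btau_antitone (add_le_add_right (Nat.one_div_le_one_div hmn) t)
  have key : ν (Ctau t) ≤ ENNReal.ofReal r := by
    rw [← iUnion_Btau_add_one_div t, hmono.measure_iUnion]
    exact iSup_le fun n => (ENNReal.le_ofReal_iff_toReal_le (measure_ne_top ν _) hr.1.le).2
      (phiTail_lt_of_tailQuantile_lt hr (lt_add_of_pos_right t (by positivity))).le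
  exact ENNReal.toReal_le_of_le_ofReal hr.1.le key

lemma tailQuantile_le_of_le (hr : 0 < r) {r' : ℝ} (hr' : r' ≤ 1) (hrr' : r ≤ r') :
    tailQuantile ν r' ≤ tailQuantile ν r :=
  csSup_le ⟨0, le_rfl, phiTail_zero (ν := ν) ▸ hr'⟩ fun _ hτ =>
    le_tailQuantile hr hτ.1 (hrr'.trans hτ.2)

lemma tailQuantile_pos (hr : r ∈ Ioc 0 1) (h : r < ν.real (Ctau 0)) : 0 < tailQuantile ν r := by
  refine (tailQuantile_nonneg hr).lt_of_ne fun h0 => ?_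
  have := measureReal_Ctau_tailQuantile_le (ν := ν) hr
  rw [← h0] at this
  linarith

end TailQuantile

section CapturedMoment

variable {p : ℝ} {ν : Measure ℝ} [IsProbabilityMeasure ν] {r : ℝ}

/-- `G(r)`: the largest part of the `p`-th moment that mass `r` of `ν` can carry, atoms being
splittable. -/
def capturedMoment (p : ℝ) (ν : Measure ℝ) (r : ℝ) : ℝ :=
  capturedMomentBy p ν (tailQuantile ν r) r

lemma capturedMoment_le (hp : 0 ≤ p) (hfin : momentP p ν ≠ ∞) (hr : r ∈ Ioc 0 1) {s : ℝ}
    (hs : 0 ≤ s) : capturedMoment p ν r ≤ capturedMomentBy p ν s r :=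
  capturedMomentBy_le hp hfin (tailQuantile_nonneg hr) hs
    (measureReal_Ctau_tailQuantile_le hr) (le_phiTail_tailQuantile hr)

lemma capturedMoment_eq (hp : 0 ≤ p) (hfin : momentP p ν ≠ ∞) (hr : r ∈ Ioc 0 1) {τ : ℝ}
    (hτ : 0 ≤ τ) (hC : ν.real (Ctau τ) ≤ r) (hB : r ≤ ν.real (Btau τ)) :
    capturedMoment p ν r = capturedMomentBy p ν τ r :=
  (capturedMoment_le hp hfin hr hτ).antisymm
    (capturedMomentBy_le hp hfin hτ (tailQuantile_nonneg hr) hC hB)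

lemma capturedMoment_sub_le (hp : 0 ≤ p) (hfin : momentP p ν ≠ ∞) {r₁ r₂ : ℝ}
    (hr₁ : r₁ ∈ Ioc 0 1) (hr₂ : r₂ ∈ Ioc 0 1) :
    capturedMoment p ν r₂ - capturedMoment p ν r₁ ≤ (r₂ - r₁) * tailQuantile ν r₁ ^ p := by
  have hτ₁ := tailQuantile_nonneg (ν := ν) hr₁
  have haffine : capturedMomentBy p ν (tailQuantile ν r₁) r₂ =
      capturedMoment p ν r₁ + (r₂ - r₁) * tailQuantile ν r₁ ^ p := by
    rw [capturedMoment, capturedMomentBy, capturedMomentBy]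
    ring
  linarith [capturedMoment_le hp hfin hr₂ hτ₁]

lemma capturedMoment_le_moment (hp : 0 < p) (hfin : momentP p ν ≠ ∞) (hr : r ∈ Ioc 0 1) :
    capturedMoment p ν r ≤ (momentP p ν).toReal :=
  calc capturedMoment p ν r ≤ capturedMomentBy p ν 0 r := capturedMoment_le hp.le hfin hr le_rfl
    _ = partialMoment p ν (Ctau 0) := by
      rw [capturedMomentBy, Real.zero_rpow hp.ne', mul_zero, add_zero]
    _ ≤ (momentP p ν).toReal := partialMoment_le_moment hfin _

lemma capturedMoment_strictMonoOn (hp : 0 ≤ p) (hfin : momentP p ν ≠ ∞) :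
    StrictMonoOn (capturedMoment p ν) (Ioc 0 (ν.real (Ctau 0))) := by
  intro r₁ hr₁ r₂ hr₂ h12
  have hsub : Ioc 0 (ν.real (Ctau 0)) ⊆ Ioc 0 1 := Ioc_subset_Ioc_right measureReal_le_one
  -- `τ(r₂)` vanishes when `r₂ = ν(C_0)`, but `τ` is positive at any `r` strictly between.
  obtain ⟨r, hr₁r, hrr₂⟩ := exists_between h12
  have hr : r ∈ Ioc 0 (ν.real (Ctau 0)) := ⟨hr₁.1.trans hr₁r, hrr₂.le.trans hr₂.2⟩
  have hpos : 0 < tailQuantile ν r ^ p :=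
    Real.rpow_pos_of_pos (tailQuantile_pos (hsub hr) (hrr₂.trans_le hr₂.2)) p
  have hnonneg : 0 ≤ tailQuantile ν r₂ ^ p := Real.rpow_nonneg (tailQuantile_nonneg (hsub hr₂)) p
  have h₁ := capturedMoment_sub_le hp hfin (hsub hr) (hsub hr₁)
  have h₂ := capturedMoment_sub_le hp hfin (hsub hr₂) (hsub hr)
  linarith [mul_neg_of_neg_of_pos (sub_neg.2 hr₁r) hpos,
    mul_nonpos_of_nonpos_of_nonneg (sub_nonpos.2 hrr₂.le) hnonneg]

lemma capturedMoment_continuousOn (hp : 0 ≤ p) (hfin : momentP p ν ≠ ∞) :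
    ContinuousOn (capturedMoment p ν) (Ioc 0 1) := by
  intro r hr
  set c := r / 2
  have hc : 0 < c := half_pos hr.1
  have hsub : Icc c 1 ⊆ Ioc 0 1 := fun x hx => ⟨hc.trans_le hx.1, hx.2⟩
  set K := tailQuantile ν c ^ p
  have hlip : LipschitzOnWith K.toNNReal (capturedMoment p ν) (Icc c 1) := by
    refine LipschitzOnWith.of_le_add_mul _ fun x hx y hy => ?_
    have hτy : 0 ≤ tailQuantile ν y ^ p := Real.rpow_nonneg (tailQuantile_nonneg (hsub hy)) p
    have hK : tailQuantile ν y ^ p ≤ K :=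
      Real.rpow_le_rpow (tailQuantile_nonneg (hsub hy)) (tailQuantile_le_of_le hc hy.2 hy.1) hp
    have hslope : (x - y) * tailQuantile ν y ^ p ≤ K * |x - y| := by
      rcases le_total y x with h | h
      · rw [abs_of_nonneg (sub_nonneg.2 h), mul_comm K]
        exact mul_le_mul_of_nonneg_left hK (sub_nonneg.2 h)
      · exact (mul_nonpos_of_nonpos_of_nonneg (sub_nonpos.2 h) hτy).trans
          (mul_nonneg (hτy.trans hK) (abs_nonneg _))
    rw [Real.coe_toNNReal _ (hτy.trans hK), Real.dist_eq]
    linarith [capturedMoment_sub_le hp hfin (hsub hy) (hsub hx)]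
  exact (hlip.continuousOn r ⟨(half_lt_self hr.1).le, hr.2⟩).mono_of_mem_nhdsWithin
    (mem_of_superset (inter_mem_nhdsWithin _ (Ioi_mem_nhds (half_lt_self hr.1)))
      fun x hx => ⟨hx.2.le, hx.1.2⟩)

end CapturedMoment

section Graph

variable {p : ℝ} {ν : Measure ℝ} [IsProbabilityMeasure ν] {r : ℝ}

lemma one_sub_vP_eq (hp : 0 ≤ p) (hfin : momentP p ν ≠ ∞) {τ β : ℝ} (hτ : 0 ≤ τ)
    (hβ : β ∈ Icc (0 : ℝ) 1) (hr : r = ν.real (Ctau τ) + β * ν.real {-τ, τ}) (hr0 : 0 < r) :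
    1 - vP p ν (Ctau τ) - β * vP p ν {-τ, τ} =
      1 - capturedMoment p ν r / (momentP p ν).toReal := by
  have hD : 0 ≤ ν.real {-τ, τ} := measureReal_nonneg
  have hC : ν.real (Ctau τ) ≤ r := by rw [hr]; linarith [mul_nonneg hβ.1 hD]
  have hB : r ≤ ν.real (Btau τ) := by
    rw [hr, measureReal_Btau hτ]
    linarith [mul_le_of_le_one_left hD hβ.2]
  rw [capturedMoment_eq hp hfin ⟨hr0, hB.trans measureReal_le_one⟩ hτ hC hB, capturedMomentBy,
    vP_eq_partialMoment_div, vP_eq_partialMoment_div, partialMoment_pair hp hfin hτ, hr]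
  ring

lemma one_sub_vP_Btau_eq (hp : 0 ≤ p) (hfin : momentP p ν ≠ ∞) {τ : ℝ} (hτ : 0 ≤ τ)
    (hr : r = ν.real (Btau τ)) (hr0 : 0 < r) :
    1 - vP p ν (Btau τ) = 1 - capturedMoment p ν r / (momentP p ν).toReal := by
  rw [← one_sub_vP_eq hp hfin hτ (right_mem_Icc.2 zero_le_one)
    (by rw [hr, measureReal_Btau hτ, one_mul]) hr0, vP_eq_partialMoment_div,
    vP_eq_partialMoment_div, vP_eq_partialMoment_div, partialMoment_Btau hfin hτ]
  ring

lemma setOf_mem_Fgraph (hp : 0 < p) (hfin : momentP p ν ≠ ∞) (hr : r ∈ Ioc 0 1) :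
    {d | (r, d) ∈ Fgraph p ν} =
      {(1 - capturedMoment p ν r / (momentP p ν).toReal) ^ (1 / p)} := by
  ext d
  simp only [Fgraph, phiTail, ← measureReal_def, mem_ofPred_eq, mem_union, mem_singleton_iff,
    Prod.mk.injEq]
  constructor
  · rintro (⟨τ, hτ, rfl, rfl⟩ | ⟨τ, hτ, -, α, hα, rfl, rfl⟩)
    · rw [one_sub_vP_Btau_eq hp.le hfin hτ rfl hr.1]
    · rw [one_sub_vP_eq hp.le hfin hτ (Ico_subset_Icc_self hα) rfl hr.1]
  · rintro rfl
    set t := tailQuantile ν r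
    have ht : 0 ≤ t := tailQuantile_nonneg hr
    rcases (le_phiTail_tailQuantile (ν := ν) hr).eq_or_lt with h | h
    · exact Or.inl ⟨t, ht, h, by rw [one_sub_vP_Btau_eq hp.le hfin ht h hr.1]⟩
    · have hC : ν.real (Ctau t) ≤ r := measureReal_Ctau_tailQuantile_le hr
      have hB : ν.real (Btau t) = ν.real (Ctau t) + ν.real {-t, t} := measureReal_Btau ht
      rw [phiTail, ← measureReal_def, hB] at h
      have hD : 0 < ν.real {-t, t} := by linarith
      have hα : (r - ν.real (Ctau t)) / ν.real {-t, t} ∈ Ico (0 : ℝ) 1 :=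
        ⟨div_nonneg (sub_nonneg.2 hC) hD.le, (div_lt_one hD).2 (by linarith)⟩
      have hr_eq :
          r = ν.real (Ctau t) + (r - ν.real (Ctau t)) / ν.real {-t, t} * ν.real {-t, t} := by
        rw [div_mul_cancel₀ _ hD.ne']
        ring
      exact Or.inr ⟨t, ht, hD, _, hα, hr_eq,
        by rw [one_sub_vP_eq hp.le hfin ht (Ico_subset_Icc_self hα) hr_eq hr.1]⟩

lemma fApprox_eq (hp : 0 < p) (hfin : momentP p ν ≠ ∞) (hr : r ∈ Ioc 0 1) :
    fApprox p ν r = (1 - capturedMoment p ν r / (momentP p ν).toReal) ^ (1 / p) := by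
  rw [fApprox, if_neg hfin, setOf_mem_Fgraph hp hfin hr, csSup_singleton]

end Graph

/-- Proposition 1 / Lemma 8 (i)-(ii): the approximation error function `f_{p,ν}` is
continuous on `(0,1]` and strictly decreasing on `(0, 1 − ν({0})]`. -/
theorem fApprox_continuous_strictAnti
    (p : ℝ) (hp : 0 < p) (ν : Measure ℝ) [IsProbabilityMeasure ν]
    (hmom0 : 0 < momentP p ν) (hmomfin : momentP p ν < ∞) :
    ContinuousOn (fApprox p ν) (Set.Ioc (0:ℝ) 1) ∧
    ∀ r₁ r₂ : ℝ, 0 < r₁ → r₁ < r₂ → r₂ ≤ 1 - (ν ({0} : Set ℝ)).toReal →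
      fApprox p ν r₂ < fApprox p ν r₁ := by
  have hfin := hmomfin.ne
  have hM : 0 < (momentP p ν).toReal := ENNReal.toReal_pos hmom0.ne' hfin
  have hf : EqOn (fApprox p ν)
      (fun r => (1 - capturedMoment p ν r / (momentP p ν).toReal) ^ (1 / p)) (Ioc 0 1) :=
    fun r hr => fApprox_eq hp hfin hr
  refine ⟨ContinuousOn.congr (fun r hr => ?_) hf, fun r₁ r₂ h₁ h₁₂ h₂ => ?_⟩
  · exact ((continuousWithinAt_const.sub ((capturedMoment_continuousOn hp.le hfin r hr).div_const
      _)).rpow_const (Or.inr (by positivity)))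
  · rw [← measureReal_def, ← probReal_compl_eq_one_sub (measurableSet_singleton 0),
      ← Ctau_zero] at h₂
    have hr₁ : r₁ ∈ Ioc 0 (ν.real (Ctau 0)) := ⟨h₁, h₁₂.le.trans h₂⟩
    have hr₂ : r₂ ∈ Ioc 0 (ν.real (Ctau 0)) := ⟨h₁.trans h₁₂, h₂⟩
    have hsub : Ioc 0 (ν.real (Ctau 0)) ⊆ Ioc 0 1 := Ioc_subset_Ioc_right measureReal_le_one
    rw [hf (hsub hr₁), hf (hsub hr₂)]
    refine Real.rpow_lt_rpow ?_ ?_ (by positivity)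
    · exact sub_nonneg.2 ((div_le_one hM).2 (capturedMoment_le_moment hp hfin (hsub hr₂)))
    · exact sub_lt_sub_left (div_lt_div_of_pos_right
        (capturedMoment_strictMonoOn hp.le hfin hr₁ hr₂ h₁₂) hM) 1
end
end
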